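/- arXiv:1707.04413 — 4 statements merged into one kernel-verified Lean document; each statement's English description precedes it below -/
import Mathlib

section
/- Suppose p satisfies SYM and fix a set U⊆[n]. Then the following four distributions on pairs (assignment, pinned factor graph) are identical: (1) draw σ⁽¹⁾=σ* uniform, draw the teacher-student graph G*(σ⁽¹⁾), pin U to σ⁽¹⁾, and output (σ⁽¹⁾, G*(σ⁽¹⁾)_{U,σ⁽¹⁾}); (2) draw G=G*, draw σ⁽²⁾ from μ_G, and output (σ⁽²⁾, G_{U,σ⁽²⁾}); (3) draw σ uniform, form G⁽³⁾=G*(σ)_{U,σ}, draw σ⁽³⁾ from μ_{G⁽³⁾}, and output (σ⁽³⁾, G⁽³⁾); (4) draw G'=G*, draw σ' from μ_{G'}, form G⁽⁴⁾=G'_{U,σ'}, draw σ⁽⁴⁾ from μ_{G⁽⁴⁾}, and output (σ⁽⁴⁾, G⁽⁴⁾). -/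
open MeasureTheory Filter
open scoped BigOperators Classical

noncomputable section

namespace TS

/-- `Λ(x) = x ln x`, with `Λ(0)=0` (since `Real.log 0 = 0`). -/
def Lam (x : ℝ) : ℝ := x * Real.log x

/-- The simplex of probability vectors on a finite set `Ω`, i.e. `𝒫(Ω)`. -/
def ProbVec (Ω : Type*) [Fintype Ω] : Type _ :=
  {μ : Ω → ℝ // (∀ a, 0 ≤ μ a) ∧ ∑ a, μ a = 1}

instance (Ω : Type*) [Fintype Ω] : MeasurableSpace (ProbVec Ω) := by
  unfold ProbVec; infer_instance

variable {Ω : Type*} [Fintype Ω] {k : ℕ} {Ψ : Type*} [Fintype Ψ]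

/-- `𝒫²_*(Ω)`: probability measures on `𝒫(Ω)` whose mean is the uniform distribution. -/
def P2star (Ω : Type*) [Fintype Ω] (π : Measure (ProbVec Ω)) : Prop :=
  IsProbabilityMeasure π ∧ ∀ a : Ω, (∫ μ, (μ : ProbVec Ω).1 a ∂π) = (Fintype.card Ω : ℝ)⁻¹

/-- product of `m` copies of a measure on the simplex -/
def piPV (Ω : Type*) [Fintype Ω] (m : ℕ) (π : Measure (ProbVec Ω)) :
    Measure (Fin m → ProbVec Ω) :=
  Measure.pi fun _ => π

/-- `ξ = |Ω|^{-k} ∑_τ E[ψ(τ)]`. -/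
def xi (k : ℕ) (w : Ψ → (Fin k → Ω) → ℝ) (p : Ψ → ℝ) : ℝ :=
  (∑ τ : Fin k → Ω, ∑ ψ, p ψ * w ψ τ) / (Fintype.card Ω : ℝ) ^ k

/-- SYM: `E[ψ(τ)] = ξ` for every `τ ∈ Ω^k`. -/
def SYM (k : ℕ) (w : Ψ → (Fin k → Ω) → ℝ) (p : Ψ → ℝ) : Prop :=
  ∀ τ : Fin k → Ω, ∑ ψ, p ψ * w ψ τ = xi k w p

/-- POS. -/
def POS (k : ℕ) (hk : 0 < k) (w : Ψ → (Fin k → Ω) → ℝ) (p : Ψ → ℝ) : Prop :=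
  ∀ π π' : Measure (ProbVec Ω), P2star Ω π → P2star Ω π' →
    0 ≤ ∑ ψ, p ψ *
      ∫ μ, (∫ μ', (Lam (∑ τ : Fin k → Ω, w ψ τ * ∏ i, (μ i).1 (τ i))
          + ((k : ℝ) - 1) * Lam (∑ τ : Fin k → Ω, w ψ τ * ∏ i, (μ' i).1 (τ i))
          - (k : ℝ) * Lam (∑ τ : Fin k → Ω, w ψ τ *
              ((μ ⟨0, hk⟩).1 (τ ⟨0, hk⟩) *
                ∏ i ∈ Finset.univ.erase ⟨0, hk⟩, (μ' i).1 (τ i))))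
        ∂(piPV Ω k π')) ∂(piPV Ω k π)

/-- the inner expectation in the first Bethe term, for a fixed value `γ` of the degree. -/
def BetheInner (k : ℕ) (w : Ψ → (Fin k → Ω) → ℝ) (p : Ψ → ℝ)
    (π : Measure (ProbVec Ω)) (γ : ℕ) : ℝ :=
  ∑ ψs : Fin γ → Ψ, ∑ hs : Fin γ → Fin k,
    (∏ i, p (ψs i)) * ((k : ℝ) ^ γ)⁻¹ *
      ∫ μs, Lam (∑ σ : Ω, ∏ i : Fin γ,
          ∑ τ : Fin k → Ω, (if τ (hs i) = σ then (1 : ℝ) else 0) * w (ψs i) τ *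
            ∏ j ∈ Finset.univ.erase (hs i), (μs i j).1 (τ j))
        ∂(Measure.pi fun _ : Fin γ => piPV Ω k π)

/-- `E[Λ(∑_τ ψ(τ) ∏_j μ_j(τ_j))]` with `ψ ∼ p` and `μ_1,…,μ_k` iid from `π`. -/
def BetheE2 (k : ℕ) (w : Ψ → (Fin k → Ω) → ℝ) (p : Ψ → ℝ)
    (π : Measure (ProbVec Ω)) : ℝ :=
  ∑ ψ, p ψ * ∫ μs, Lam (∑ τ : Fin k → Ω, w ψ τ * ∏ j, (μs j).1 (τ j)) ∂(piPV Ω k π)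

/-- mean of a degree distribution `D` on `ℕ`. -/
def meanD (D : ℕ → ℝ) : ℝ := ∑' ℓ : ℕ, D ℓ * ℓ

/-- The Bethe functional `B(D,π)`. -/
def Bethe (k : ℕ) (w : Ψ → (Fin k → Ω) → ℝ) (p : Ψ → ℝ) (D : ℕ → ℝ)
    (π : Measure (ProbVec Ω)) : ℝ :=
  (Fintype.card Ω : ℝ)⁻¹ *
      (∑' γ : ℕ, D γ * ((xi k w p ^ γ)⁻¹ * BetheInner k w p π γ))
    - ((k : ℝ) - 1) / ((k : ℝ) * xi k w p) * meanD D * BetheE2 k w p π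

/-- `sup_{π ∈ 𝒫²_*(Ω)} B(D,π)`. -/
def BetheSup (Ω : Type*) [Fintype Ω] (k : ℕ) (w : Ψ → (Fin k → Ω) → ℝ) (p : Ψ → ℝ)
    (D : ℕ → ℝ) : ℝ :=
  sSup {b : ℝ | ∃ π : Measure (ProbVec Ω), P2star Ω π ∧ b = Bethe k w p D π}

/-! ### Factor graphs and the configuration model -/

/-- an (ordered) check-node neighbourhood on `n` variables. -/
abbrev CNode (n k : ℕ) := Fin k → Fin n

/-- an unweighted factor graph: the ordered list of its check-node neighbourhoods. -/
abbrev UGraph (n k : ℕ) := List (CNode n k)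

/-- a weighted factor graph: each check node carries a weight function index from `Ψ`. -/
abbrev WGraph (n k : ℕ) (Ψ : Type*) := List (CNode n k × Ψ)

def unw {n k : ℕ} {Ψ : Type*} (G : WGraph n k Ψ) : UGraph n k := G.map Prod.fst

/-- the flattened list of sockets visited by a list of check nodes. -/
def flatten {n k : ℕ} (G : UGraph n k) : List (Fin n) :=
  G.flatMap fun a => List.ofFn a

/-- probability of drawing the given sequence of variable nodes, one at a time,
with probability proportional to the remaining degrees, updating after each draw. -/
def seqDrawProb {n : ℕ} : (Fin n → ℕ) → List (Fin n) → ℝ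
  | _, [] => 1
  | δ, x :: xs =>
      ((δ x : ℝ) / ∑ y, (δ y : ℝ)) * seqDrawProb (Function.update δ x (δ x - 1)) xs

/-- mass function of the configuration model with degree sequence `d`:
the sockets are drawn one at a time proportionally to the remaining degrees and every
`k` consecutive draws form a check node. -/
def cmMass (n k : ℕ) (d : Fin n → ℕ) (G : UGraph n k) : ℝ :=
  (if G.length = (∑ x, d x) / k then (1 : ℝ) else 0) * seqDrawProb d (flatten G)

/-- `d` is a `D`-partition of `[n]`: for each `ℓ`, a `D(ℓ)` fraction of the variables
has degree `ℓ`. -/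
def isDPart (n : ℕ) (D : ℕ → ℝ) (d : Fin n → ℕ) : Prop :=
  ∀ ℓ : ℕ, ((Finset.univ.filter fun x => d x = ℓ).card : ℝ) = n * D ℓ

/-- mass function of a uniformly random `D`-partition of `[n]`. -/
def dMass (n : ℕ) (D : ℕ → ℝ) (d : Fin n → ℕ) : ℝ :=
  (if isDPart n D d then (1 : ℝ) else 0) /
    (Nat.card {d' : Fin n → ℕ // isDPart n D d'} : ℝ)

/-- mass function of the unweighted random `(D,k)`-graph `G_D` on `[n]`. -/
def ugLaw (n k : ℕ) (D : ℕ → ℝ) (G : UGraph n k) : ℝ :=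
  ∑' d : Fin n → ℕ, dMass n D d * cmMass n k d G

/-- total weight `ψ_G(σ)` of an assignment. -/
def gWeight {n k : ℕ} (w : Ψ → (Fin k → Ω) → ℝ) (G : WGraph n k Ψ) (σ : Fin n → Ω) : ℝ :=
  (G.map fun a => w a.2 fun j => σ (a.1 j)).prod

/-- the partition function `Z(G)`. -/
def Z {n k : ℕ} (w : Ψ → (Fin k → Ω) → ℝ) (G : WGraph n k Ψ) : ℝ :=
  ∑ σ : Fin n → Ω, gWeight w G σ

/-- the Gibbs measure `μ_G`. -/
def gibbs {n k : ℕ} (w : Ψ → (Fin k → Ω) → ℝ) (G : WGraph n k Ψ) (σ : Fin n → Ω) : ℝ :=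
  gWeight w G σ / Z w G

/-- probability that the teacher assigns the given weights to the check nodes of `G`,
given the ground truth `σ`. -/
def twMass {n k : ℕ} (w : Ψ → (Fin k → Ω) → ℝ) (p : Ψ → ℝ) (σ : Fin n → Ω)
    (G : WGraph n k Ψ) : ℝ :=
  (G.map fun a => p a.2 * w a.2 (fun j => σ (a.1 j)) /
      ∑ ψ', p ψ' * w ψ' fun j => σ (a.1 j)).prod

/-- joint mass function of `(σ*, G*_D)` in the `(D,k)` teacher–student model. -/
def tsJoint (n k : ℕ) (w : Ψ → (Fin k → Ω) → ℝ) (p : Ψ → ℝ) (D : ℕ → ℝ)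
    (σ : Fin n → Ω) (G : WGraph n k Ψ) : ℝ :=
  ((Fintype.card Ω : ℝ) ^ n)⁻¹ * ugLaw n k D (unw G) * twMass w p σ G

/-- mutual information of a joint mass function on `A × B`. -/
def MI {A B : Type*} (J : A → B → ℝ) : ℝ :=
  ∑' a : A, ∑' b : B, J a b *
    Real.log (J a b / ((∑' b' : B, J a b') * (∑' a' : A, J a' b)))

/-- `E[ln Z(G*_D)]`. -/
def ElnZ (n k : ℕ) (w : Ψ → (Fin k → Ω) → ℝ) (p : Ψ → ℝ) (D : ℕ → ℝ) : ℝ :=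
  ∑' G : WGraph n k Ψ, (∑ σ : Fin n → Ω, tsJoint n k w p D σ G) * Real.log (Z w G)

end TS

namespace TS

/-- joint mass of `(σ*, G*(σ*))` in the teacher–student model whose unweighted graph
structure is drawn from an arbitrary law `q` independent of `σ*`. -/
def tsJointQ (n k : ℕ) {Ω : Type*} [Fintype Ω] {Ψ : Type*} [Fintype Ψ]
    (w : Ψ → (Fin k → Ω) → ℝ) (p : Ψ → ℝ) (q : UGraph n k → ℝ)
    (σ : Fin n → Ω) (G : WGraph n k Ψ) : ℝ :=
  ((Fintype.card Ω : ℝ) ^ n)⁻¹ * q (unw G) * twMass w p σ G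

variable {Ω : Type*} [Fintype Ω] {Ψ : Type*} [Fintype Ψ]

/-- restriction of an assignment to the pinned set `U`. -/
def restr {n : ℕ} (U : Finset (Fin n)) (σ : Fin n → Ω) : {x // x ∈ U} → Ω :=
  fun x => σ x.1

/-- partition function of the graph `G` pinned on `U` to the values `v`. -/
def Zpin {n k : ℕ} (w : Ψ → (Fin k → Ω) → ℝ) (G : WGraph n k Ψ)
    (U : Finset (Fin n)) (v : {x // x ∈ U} → Ω) : ℝ :=
  ∑ σ : Fin n → Ω, if restr U σ = v then gWeight w G σ else 0

/-- Gibbs measure of the graph `G` pinned on `U` to the values `v`. -/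
def gibbsPin {n k : ℕ} (w : Ψ → (Fin k → Ω) → ℝ) (G : WGraph n k Ψ)
    (U : Finset (Fin n)) (v : {x // x ∈ U} → Ω) (σ : Fin n → Ω) : ℝ :=
  (if restr U σ = v then gWeight w G σ else 0) / Zpin w G U v

end TS

/-!
Under SYM the normaliser `∑ ψ', p ψ' · ψ'(σ(∂a))` of every check node equals `ξ` whatever `σ`
is, so the planted joint law factorises as `c(G) · ψ_G(σ)`: given `G*`, the ground truth is
distributed according to `μ_G` (the Nishimori property). Conditioning a law proportional to
`ψ_G` on `σ|_U = v` yields the pinned Gibbs measure, so each of the four experiments has mass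
`c(G) · ψ_G(σ) · 1{σ|_U = v}` at `(σ, G, v)`.
-/

namespace TS

section GibbsMeasure

variable {Ω : Type*} {Ψ : Type*} {n k : ℕ} {w : Ψ → (Fin k → Ω) → ℝ}

lemma gWeight_pos (hw : ∀ ψ τ, 0 < w ψ τ) (G : WGraph n k Ψ) (σ : Fin n → Ω) :
    0 < gWeight w G σ :=
  List.prod_pos fun _ hx => by
    obtain ⟨a, -, rfl⟩ := List.mem_map.1 hx
    exact hw _ _

variable [Fintype Ω]

lemma Z_pos [Nonempty Ω] (hw : ∀ ψ τ, 0 < w ψ τ) (G : WGraph n k Ψ) : 0 < Z w G :=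
  Finset.sum_pos (fun σ _ => gWeight_pos hw G σ) Finset.univ_nonempty

lemma Zpin_pos [Nonempty Ω] (hw : ∀ ψ τ, 0 < w ψ τ) (G : WGraph n k Ψ)
    (U : Finset (Fin n)) (v : {x // x ∈ U} → Ω) : 0 < Zpin w G U v := by
  let σ : Fin n → Ω := fun x => if h : x ∈ U then v ⟨x, h⟩ else Classical.arbitrary Ω
  have hσ : restr U σ = v := funext fun x => by simp [σ, restr, x.2]
  refine Finset.sum_pos' (fun τ _ => ?_) ⟨σ, Finset.mem_univ _, ?_⟩
  · split_ifs
    exacts [(gWeight_pos hw G τ).le, le_rfl]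
  · rw [if_pos hσ]
    exact gWeight_pos hw G σ

lemma Z_mul_gibbs (G : WGraph n k Ψ) (hZ : Z w G ≠ 0) (σ : Fin n → Ω) :
    Z w G * gibbs w G σ = gWeight w G σ :=
  mul_div_cancel₀ _ hZ

lemma Zpin_mul_gibbsPin (G : WGraph n k Ψ) (U : Finset (Fin n)) (v : {x // x ∈ U} → Ω)
    (hZ : Zpin w G U v ≠ 0) (σ : Fin n → Ω) :
    Zpin w G U v * gibbsPin w G U v σ =
      gWeight w G σ * (if restr U σ = v then 1 else 0) := by
  rw [gibbsPin, mul_div_cancel₀ _ hZ, mul_ite, mul_one, mul_zero]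

lemma sum_gWeight_mul_indicator (G : WGraph n k Ψ) (U : Finset (Fin n))
    (v : {x // x ∈ U} → Ω) :
    ∑ σ, gWeight w G σ * (if restr U σ = v then 1 else 0) = Zpin w G U v := by
  simp only [Zpin, mul_ite, mul_one, mul_zero]

lemma sum_gibbs_mul_indicator (G : WGraph n k Ψ) (U : Finset (Fin n))
    (v : {x // x ∈ U} → Ω) :
    ∑ σ, gibbs w G σ * (if restr U σ = v then 1 else 0) = Zpin w G U v / Z w G := by
  simp only [gibbs, div_mul_eq_mul_div, ← Finset.sum_div, sum_gWeight_mul_indicator]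

section ProportionalToWeight

variable {G : WGraph n k Ψ} {J : (Fin n → Ω) → ℝ} {c : ℝ}

lemma sum_eq_mul_Z (hJ : ∀ σ, J σ = c * gWeight w G σ) : ∑ σ, J σ = c * Z w G := by
  simp only [hJ, Z, Finset.mul_sum]

lemma sum_mul_gibbs_of_eq_mul_gWeight (hJ : ∀ σ, J σ = c * gWeight w G σ)
    (hZ : Z w G ≠ 0) (σ : Fin n → Ω) : (∑ σ', J σ') * gibbs w G σ = J σ := by
  rw [sum_eq_mul_Z hJ, hJ, mul_assoc, Z_mul_gibbs G hZ]

lemma sum_mul_indicator_eq_mul_Zpin (hJ : ∀ σ, J σ = c * gWeight w G σ)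
    (U : Finset (Fin n)) (v : {x // x ∈ U} → Ω) :
    ∑ σ, J σ * (if restr U σ = v then 1 else 0) = c * Zpin w G U v := by
  simp only [hJ, mul_assoc, ← Finset.mul_sum, sum_gWeight_mul_indicator]

lemma sum_mul_indicator_mul_gibbsPin_of_eq_mul_gWeight (hJ : ∀ σ, J σ = c * gWeight w G σ)
    (U : Finset (Fin n)) (v : {x // x ∈ U} → Ω) (hZ : Zpin w G U v ≠ 0) (σ : Fin n → Ω) :
    (∑ σ', J σ' * (if restr U σ' = v then 1 else 0)) * gibbsPin w G U v σ =
      J σ * (if restr U σ = v then 1 else 0) := by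
  rw [sum_mul_indicator_eq_mul_Zpin hJ, hJ, mul_assoc, Zpin_mul_gibbsPin G U v hZ, mul_assoc]

lemma sum_mul_indicator_eq_sum_mul_sum_gibbs_mul_indicator
    (hJ : ∀ σ, J σ = c * gWeight w G σ) (hZ : Z w G ≠ 0)
    (U : Finset (Fin n)) (v : {x // x ∈ U} → Ω) :
    ∑ σ, J σ * (if restr U σ = v then 1 else 0) =
      (∑ σ, J σ) * ∑ σ, gibbs w G σ * (if restr U σ = v then 1 else 0) := by
  rw [sum_mul_indicator_eq_mul_Zpin hJ, sum_eq_mul_Z hJ, sum_gibbs_mul_indicator, mul_assoc,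
    mul_div_cancel₀ _ hZ]

end ProportionalToWeight

end GibbsMeasure

section TeacherStudent

variable {Ω : Type*} [Fintype Ω] {Ψ : Type*} [Fintype Ψ] {n k : ℕ}
  {w : Ψ → (Fin k → Ω) → ℝ} {p : Ψ → ℝ}

lemma twMass_eq_prod_mul_gWeight (hSYM : SYM k w p) (σ : Fin n → Ω) (G : WGraph n k Ψ) :
    twMass w p σ G = (G.map fun a => p a.2 / xi k w p).prod * gWeight w G σ := by
  induction G with
  | nil => simp [twMass, gWeight]
  | cons a G ih =>
    simp only [twMass, gWeight, List.map_cons, List.prod_cons] at ih ⊢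
    rw [ih, hSYM]
    ring

lemma exists_tsJointQ_eq_mul_gWeight (hSYM : SYM k w p) (q : UGraph n k → ℝ)
    (G : WGraph n k Ψ) : ∃ c, ∀ σ, tsJointQ n k w p q σ G = c * gWeight w G σ :=
  ⟨((Fintype.card Ω : ℝ) ^ n)⁻¹ * q (unw G) * (G.map fun a => p a.2 / xi k w p).prod,
    fun σ => by rw [tsJointQ, twMass_eq_prod_mul_gWeight hSYM]; ring⟩

end TeacherStudent

end TS

open TS in
theorem pinning_preserves_nishimori_general
    {Ω : Type*} [Fintype Ω] [Nonempty Ω] {Ψ : Type*} [Fintype Ψ]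
    (n k : ℕ)
    (w : Ψ → (Fin k → Ω) → ℝ) (p : Ψ → ℝ)
    (hw : ∀ ψ τ, w ψ τ ∈ Set.Ioo (0 : ℝ) 2)
    (hSYM : TS.SYM k w p)
    (q : TS.UGraph n k → ℝ)
    (U : Finset (Fin n)) :
    ∀ (σ : Fin n → Ω) (G : TS.WGraph n k Ψ) (v : {x // x ∈ U} → Ω),
      -- mass functions of the four experiments agree at `(σ, G, v)`:
      (TS.tsJointQ n k w p q σ G * (if TS.restr U σ = v then 1 else 0) =
        (∑ σ' : Fin n → Ω, TS.tsJointQ n k w p q σ' G) * TS.gibbs w G σ *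
          (if TS.restr U σ = v then 1 else 0)) ∧
      ((∑ σ' : Fin n → Ω, TS.tsJointQ n k w p q σ' G) * TS.gibbs w G σ *
          (if TS.restr U σ = v then 1 else 0) =
        (∑ σ₀ : Fin n → Ω,
            TS.tsJointQ n k w p q σ₀ G * (if TS.restr U σ₀ = v then 1 else 0)) *
          TS.gibbsPin w G U v σ) ∧
      ((∑ σ₀ : Fin n → Ω,
            TS.tsJointQ n k w p q σ₀ G * (if TS.restr U σ₀ = v then 1 else 0)) *
          TS.gibbsPin w G U v σ =
        (∑ σ' : Fin n → Ω, TS.tsJointQ n k w p q σ' G) *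
          (∑ σ₀ : Fin n → Ω, TS.gibbs w G σ₀ * (if TS.restr U σ₀ = v then 1 else 0)) *
          TS.gibbsPin w G U v σ) := by
  intro σ G v
  have hw' : ∀ ψ τ, 0 < w ψ τ := fun ψ τ => (hw ψ τ).1
  have hZ := (TS.Z_pos hw' G).ne'
  obtain ⟨c, hJ⟩ := TS.exists_tsJointQ_eq_mul_gWeight hSYM q G
  have hnishimori := TS.sum_mul_gibbs_of_eq_mul_gWeight hJ hZ σ
  have hnishimori_pin := TS.sum_mul_indicator_mul_gibbsPin_of_eq_mul_gWeight hJ U v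
    (TS.Zpin_pos hw' G U v).ne' σ
  refine ⟨?_, ?_, ?_⟩
  · rw [hnishimori]
  · rw [hnishimori, hnishimori_pin]
  · rw [TS.sum_mul_indicator_eq_sum_mul_sum_gibbs_mul_indicator hJ hZ]

open TS in
/-- **Pinning preserves the Nishimori property.** Under SYM, for any fixed pinned set `U`
the following four distributions on triples
(output assignment, weighted graph, pin values on `U`) — encoding pairs of assignments and
pinned factor graphs — coincide:
(1) `σ* → G*(σ*) → pin U to σ*`, output `σ*`;
(2) `G* → σ⁽²⁾ ∼ μ_{G*} → pin U to σ⁽²⁾`, output `σ⁽²⁾`;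
(3) `σ → G⁽³⁾ = G*(σ)_{U,σ}`, output `σ⁽³⁾ ∼ μ_{G⁽³⁾}`;
(4) `G* → σ' ∼ μ_{G*} → G⁽⁴⁾ = G*_{U,σ'}`, output `σ⁽⁴⁾ ∼ μ_{G⁽⁴⁾}`. -/
theorem pinning_preserves_nishimori
    {Ω : Type*} [Fintype Ω] [Nonempty Ω] {Ψ : Type*} [Fintype Ψ] [Nonempty Ψ]
    (n k : ℕ) (hk : 1 < k)
    (w : Ψ → (Fin k → Ω) → ℝ) (p : Ψ → ℝ)
    (hw : ∀ ψ τ, w ψ τ ∈ Set.Ioo (0 : ℝ) 2)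
    (hp0 : ∀ ψ, 0 ≤ p ψ) (hp1 : ∑ ψ, p ψ = 1)
    (hSYM : TS.SYM k w p)
    (q : TS.UGraph n k → ℝ) (hq0 : ∀ G, 0 ≤ q G) (hq1 : ∑' G : TS.UGraph n k, q G = 1)
    (U : Finset (Fin n)) :
    ∀ (σ : Fin n → Ω) (G : TS.WGraph n k Ψ) (v : {x // x ∈ U} → Ω),
      -- mass functions of the four experiments agree at `(σ, G, v)`:
      (TS.tsJointQ n k w p q σ G * (if TS.restr U σ = v then 1 else 0) =
        (∑ σ' : Fin n → Ω, TS.tsJointQ n k w p q σ' G) * TS.gibbs w G σ *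
          (if TS.restr U σ = v then 1 else 0)) ∧
      ((∑ σ' : Fin n → Ω, TS.tsJointQ n k w p q σ' G) * TS.gibbs w G σ *
          (if TS.restr U σ = v then 1 else 0) =
        (∑ σ₀ : Fin n → Ω,
            TS.tsJointQ n k w p q σ₀ G * (if TS.restr U σ₀ = v then 1 else 0)) *
          TS.gibbsPin w G U v σ) ∧
      ((∑ σ₀ : Fin n → Ω,
            TS.tsJointQ n k w p q σ₀ G * (if TS.restr U σ₀ = v then 1 else 0)) *
          TS.gibbsPin w G U v σ =
        (∑ σ' : Fin n → Ω, TS.tsJointQ n k w p q σ' G) *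
          (∑ σ₀ : Fin n → Ω, TS.gibbs w G σ₀ * (if TS.restr U σ₀ = v then 1 else 0)) *
          TS.gibbsPin w G U v σ) :=
  pinning_preserves_nishimori_general n k w p hw hSYM q U
end
end

section
/- Let V be a finite set, δ:V→ℕ not identically zero, and c:V→ℤ with c(v)≤δ(v) for all v∈V and 0 ≤ ∑_{v∈V} c(v) < ∑_{v∈V} δ(v). Define δ'(v)=(δ(v)−c(v))_+=δ(v)−c(v), and the probability distributions ν(v)=δ(v)/∑_y δ(y) and ν'(v)=δ'(v)/∑_y δ'(y) on V. Then ‖ν−ν'‖_TV ≤ (∑_{v∈V} max(c(v),0)) / (∑_{v∈V} δ(v) − ∑_{v∈V} c(v)). -/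
open scoped BigOperators

/-! Writing `S = ∑ δ` and `C = ∑ c`, each term satisfies
`δ v / S - (δ v - c v) / (S - C) = (δ v / S - δ v / (S - C)) + c v / (S - C) ≤ c v / (S - C)`,
because shrinking the normaliser from `S` to `S - C` can only increase `δ v / ·`.
Taking positive parts and summing gives the bound. -/

lemma div_sub_div_sub_le {a c S C : ℝ} (ha : 0 ≤ a) (hC : 0 ≤ C) (hCS : C < S) :
    a / S - (a - c) / (S - C) ≤ c / (S - C) := by
  have hshrink : a / S ≤ a / (S - C) :=
    div_le_div_of_nonneg_left ha (sub_pos.mpr hCS) (sub_le_self S hC)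
  calc a / S - (a - c) / (S - C) = (a / S - a / (S - C)) + c / (S - C) := by ring
    _ ≤ c / (S - C) := by linarith

lemma sum_posPart_normalize_sub_le {V : Type*} [Fintype V] (p c : V → ℝ) (hp : ∀ v, 0 ≤ p v)
    (hc0 : 0 ≤ ∑ v, c v) (hclt : ∑ v, c v < ∑ v, p v) :
    ∑ v, max (p v / ∑ y, p y - (p v - c v) / ∑ y, (p y - c y)) 0
      ≤ (∑ v, max (c v) 0) / (∑ v, p v - ∑ v, c v) := by
  rw [Finset.sum_sub_distrib, Finset.sum_div]
  refine Finset.sum_le_sum fun v _ => ?_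
  rw [← max_div_div_right (sub_pos.mpr hclt).le, zero_div]
  exact max_le_max (div_sub_div_sub_le (hp v) hc0 hclt) le_rfl

theorem tv_dist_residual_degree_bound_general {V : Type*} [Fintype V]
    (δ : V → ℕ) (c : V → ℤ)
    (hc0 : 0 ≤ ∑ v, c v)
    (hclt : ∑ v, c v < ∑ v, (δ v : ℤ)) :
    ∑ v, max ((δ v : ℝ) / (∑ y, (δ y : ℝ))
        - ((δ v : ℝ) - (c v : ℝ)) / (∑ y, ((δ y : ℝ) - (c y : ℝ)))) 0
      ≤ (∑ v, max ((c v : ℝ)) 0) / ((∑ v, (δ v : ℝ)) - ∑ v, (c v : ℝ)) :=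
  sum_posPart_normalize_sub_le (fun v => (δ v : ℝ)) (fun v => (c v : ℝ))
    (fun v => Nat.cast_nonneg (δ v)) (by exact_mod_cast hc0)
    (by exact_mod_cast hclt)

/-- **Total variation bound for perturbed residual-degree distributions.**
If `δ' = δ − c` (with `c v ≤ δ v` pointwise and `0 ≤ ∑ c < ∑ δ`), and
`ν ∝ δ`, `ν' ∝ δ'`, then `‖ν−ν'‖_TV = ∑_v (ν v − ν' v)₊ ≤ (∑_v (c v)₊)/(∑ δ − ∑ c)`. -/
theorem tv_dist_residual_degree_bound {V : Type*} [Fintype V]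
    (δ : V → ℕ) (c : V → ℤ)
    (hδ : ∃ v, δ v ≠ 0)
    (hc : ∀ v, c v ≤ (δ v : ℤ))
    (hc0 : 0 ≤ ∑ v, c v)
    (hclt : ∑ v, c v < ∑ v, (δ v : ℤ)) :
    ∑ v, max ((δ v : ℝ) / (∑ y, (δ y : ℝ))
        - ((δ v : ℝ) - (c v : ℝ)) / (∑ y, ((δ y : ℝ) - (c y : ℝ)))) 0
      ≤ (∑ v, max ((c v : ℝ)) 0) / ((∑ v, (δ v : ℝ)) - ∑ v, (c v : ℝ)) :=
  tv_dist_residual_degree_bound_general δ c hc0 hclt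
end

section
/- Let k≥1 be an integer, η∈(0,1/2), Ω={−1,1}, and let Ψ={ψ_1,ψ_{−1}} with ψ_s(σ)=1+s(1−2η)∏_{i=1}^k σ_i for s∈{±1} and σ∈Ω^k, equipped with the uniform distribution p. Then: (i) SYM holds with ξ=1, i.e. E_{ψ∼p}[ψ(σ)]=1 for every σ∈Ω^k; and (ii) POS holds, i.e. for all probability measures π,π' on P(Ω) whose mean is the uniform distribution on Ω, with μ_1,…,μ_k iid from π, μ'_1,…,μ'_k iid from π', and ψ from p, all mutually independent, E[Λ(∑_{τ∈Ω^k}ψ(τ)∏_{i=1}^k μ_i(τ_i)) + (k−1)Λ(∑_{τ∈Ω^k}ψ(τ)∏_{i=1}^k μ'_i(τ_i)) − kΛ(∑_{τ∈Ω^k}ψ(τ)μ_1(τ_1)∏_{i=2}^k μ'_i(τ_i))] ≥ 0. -/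
open MeasureTheory Filter
open scoped BigOperators Classical

noncomputable section

namespace TS

/-- the spin value `±1` encoded by a Boolean. -/
def sval (b : Bool) : ℝ := if b then 1 else -1

/-- the LDGM weight functions `ψ_s(σ) = 1 + s(1−2η)∏_i σ_i`, `s ∈ {±1}`,
on the spin alphabet `Ω = {±1}` (encoded by `Bool`). -/
def ldgmW (k : ℕ) (η : ℝ) (s : Bool) (σ : Fin k → Bool) : ℝ :=
  1 + sval s * (1 - 2 * η) * ∏ i, sval (σ i)

end TS

/-!
Write `θ = 1 - 2η` and `X(μ) = μ(1) - μ(-1)` for the bias of `μ ∈ 𝒫({±1})`. Expanding the product,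
`∑_τ ψ_s(τ) ∏ μ_i(τ_i) = 1 + s θ ∏ X(μ_i)`, so averaging over the sign `s` replaces `Λ` by the
even function `(Λ(1 + u) + Λ(1 - u)) / 2 = ∑_{n ≥ 0} u^(2n+2) / ((2n+1)(2n+2))`, whose coefficients
are nonnegative. Integrating termwise, the POS expression becomes
`∑_n c_n θ^(2n+2) (a_n^k + (k-1) b_n^k - k a_n b_n^(k-1))`, where `a_n, b_n ≥ 0` are the
`(2n+2)`-th moments of the bias under `π` and `π'`; each term is nonnegative by AM-GM.
SYM holds because `ψ_1 + ψ_{-1} = 2`.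
-/

namespace TS

open Finset

def evenLam (u : ℝ) : ℝ := (Lam (1 + u) + Lam (1 - u)) / 2

def evenLamCoeff (n : ℕ) : ℝ := ((2 * n + 1) * (2 * n + 2))⁻¹

theorem evenLamCoeff_nonneg (n : ℕ) : 0 ≤ evenLamCoeff n := by
  unfold evenLamCoeff; positivity

/-- Combines `log (1 + u) - log (1 - u) = ∑ 2 u^(2n+1)/(2n+1)` with
`log (1 + u) + log (1 - u) = log (1 - u²) = -∑ u^(2n+2)/(n+1)`. -/
theorem hasSum_evenLam {u : ℝ} (hu : |u| < 1) :
    HasSum (fun n : ℕ => evenLamCoeff n * u ^ (2 * n + 2)) (evenLam u) := by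
  have hsub := Real.hasSum_log_sub_log_of_abs_lt_one hu
  have hu2 : |u ^ 2| < 1 := by rw [abs_pow]; exact pow_lt_one₀ (abs_nonneg u) hu two_ne_zero
  have hadd := Real.hasSum_pow_div_log_of_abs_lt_one hu2
  have hlog : Real.log (1 - u ^ 2) = Real.log (1 + u) + Real.log (1 - u) := by
    obtain ⟨h₁, h₂⟩ := abs_lt.mp hu
    rw [← Real.log_mul (by linarith) (by linarith)]; ring_nf
  rw [hlog] at hadd
  have hterm : ∀ n : ℕ, evenLamCoeff n * u ^ (2 * n + 2)
      = (u * (2 * (1 / (2 * n + 1)) * u ^ (2 * n + 1)) - (u ^ 2) ^ (n + 1) / (n + 1)) / 2 := by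
    intro n
    unfold evenLamCoeff
    field_simp
    ring
  have hval : evenLam u = (u * (Real.log (1 + u) - Real.log (1 - u))
      - -(Real.log (1 + u) + Real.log (1 - u))) / 2 := by
    unfold evenLam Lam; ring
  rw [hval, funext hterm]
  exact ((hsub.mul_left u).sub hadd).div_const 2

theorem abs_prod_le_one {α ι : Type*} {f : α → ℝ} (hf1 : ∀ a, |f a| ≤ 1) (t : Finset ι)
    (x : ι → α) : |∏ i ∈ t, f (x i)| ≤ 1 := by
  rw [abs_prod]; exact prod_le_one (fun _ _ => abs_nonneg _) fun i _ => hf1 (x i)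

theorem exists_abs_lam_le_of_mem_Icc : ∃ C, ∀ y ∈ Set.Icc (0 : ℝ) 2, |Lam y| ≤ C :=
  isCompact_Icc.exists_bound_of_continuousOn Real.continuous_mul_log.continuousOn

theorem mul_mul_pow_pred_le (k : ℕ) {a b : ℝ} (ha : 0 ≤ a) (hb : 0 ≤ b) :
    k * (a * b ^ (k - 1)) ≤ a ^ k + (k - 1) * b ^ k := by
  rcases k with _ | k
  · simp
  rcases hb.eq_or_lt with rfl | hb
  · rcases k with _ | k <;> simp [ha]
  have := one_add_mul_le_pow (a := a / b - 1) (by linarith [div_nonneg ha hb.le]) (k + 1)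
  rw [add_sub_cancel, div_pow, le_div_iff₀ (by positivity)] at this
  simp only [Nat.add_sub_cancel, pow_succ] at this ⊢
  push_cast at this ⊢
  have e : (a / b - 1) * (b ^ k * b) = (a - b) * b ^ k := by field_simp
  nlinarith [e]

section Integrals

variable {β : Type*} [MeasurableSpace β] {Q : Measure β}

theorem integrable_lam_one_add [IsFiniteMeasure Q] {g : β → ℝ} (hg : Measurable g)
    (hg1 : ∀ z, |g z| ≤ 1) : Integrable (fun z => Lam (1 + g z)) Q := by
  obtain ⟨C, hC⟩ := exists_abs_lam_le_of_mem_Icc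
  refine .of_bound ?_ C (ae_of_all _ fun z => hC _ ?_)
  · exact (Real.continuous_mul_log.measurable.comp (measurable_const.add hg)).aestronglyMeasurable
  · have := abs_le.mp (hg1 z)
    constructor <;> linarith

theorem integrable_evenLam [IsFiniteMeasure Q] {g : β → ℝ} (hg : Measurable g)
    (hg1 : ∀ z, |g z| ≤ 1) : Integrable (fun z => evenLam (g z)) Q := by
  have hneg : ∀ z, |-g z| ≤ 1 := fun z => (abs_neg (g z)).trans_le (hg1 z)
  simpa only [evenLam, sub_eq_add_neg, Pi.add_apply, Pi.neg_apply] using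
    ((integrable_lam_one_add hg hg1).add (integrable_lam_one_add hg.neg hneg)).div_const 2

theorem hasSum_integral_evenLam [IsProbabilityMeasure Q] {θ : ℝ} (hθ : |θ| < 1) {g : β → ℝ}
    (hg : Measurable g) (hg1 : ∀ z, |g z| ≤ 1) :
    HasSum (fun n : ℕ => evenLamCoeff n * θ ^ (2 * n + 2) * ∫ z, g z ^ (2 * n + 2) ∂Q)
      (∫ z, evenLam (θ * g z) ∂Q) := by
  have hw : ∀ n : ℕ, 0 ≤ evenLamCoeff n * θ ^ (2 * n + 2) := fun n =>
    mul_nonneg (evenLamCoeff_nonneg n) (Even.pow_nonneg ⟨n + 1, by ring⟩ θ)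
  have hbound : ∀ n z, ‖evenLamCoeff n * θ ^ (2 * n + 2) * g z ^ (2 * n + 2)‖
      ≤ evenLamCoeff n * θ ^ (2 * n + 2) := by
    intro n z
    rw [norm_mul, Real.norm_of_nonneg (hw n), norm_pow, Real.norm_eq_abs]
    exact mul_le_of_le_one_right (hw n) (pow_le_one₀ (abs_nonneg _) (hg1 z))
  have hθg : ∀ z, |θ * g z| < 1 := fun z => by
    rw [abs_mul]; exact (mul_le_of_le_one_right (abs_nonneg _) (hg1 z)).trans_lt hθ
  have := hasSum_integral_of_dominated_convergence (μ := Q)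
    (F := fun n z => evenLamCoeff n * θ ^ (2 * n + 2) * g z ^ (2 * n + 2))
    (fun n _ => evenLamCoeff n * θ ^ (2 * n + 2))
    (fun n => (measurable_const.mul (hg.pow_const _)).aestronglyMeasurable)
    (fun n => ae_of_all _ (hbound n))
    (ae_of_all _ fun _ => by simpa only [mul_pow] using (hasSum_evenLam hθ).summable)
    (integrable_const _)
    (ae_of_all _ fun z => by simpa only [mul_pow, mul_assoc] using hasSum_evenLam (hθg z))
  simpa only [integral_const_mul] using this

theorem hasSum_integral_evenLam_add_sub [IsProbabilityMeasure Q] {θ : ℝ} (hθ : |θ| < 1)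
    {X Y Z : β → ℝ} (hX : Measurable X) (hY : Measurable Y) (hZ : Measurable Z)
    (hX1 : ∀ z, |X z| ≤ 1) (hY1 : ∀ z, |Y z| ≤ 1) (hZ1 : ∀ z, |Z z| ≤ 1) (c d : ℝ) :
    HasSum (fun n : ℕ => evenLamCoeff n * θ ^ (2 * n + 2) * ∫ z, X z ^ (2 * n + 2) ∂Q
        + c * (evenLamCoeff n * θ ^ (2 * n + 2) * ∫ z, Y z ^ (2 * n + 2) ∂Q)
        - d * (evenLamCoeff n * θ ^ (2 * n + 2) * ∫ z, Z z ^ (2 * n + 2) ∂Q))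
      (∫ z, evenLam (θ * X z) + c * evenLam (θ * Y z) - d * evenLam (θ * Z z) ∂Q) := by
  have hθg : ∀ {g : β → ℝ}, (∀ z, |g z| ≤ 1) → ∀ z, |θ * g z| ≤ 1 :=
    fun hg z => by rw [abs_mul]; exact mul_le_one₀ hθ.le (abs_nonneg _) (hg z)
  have iX := integrable_evenLam (Q := Q) (hX.const_mul θ) (hθg hX1)
  have iY := (integrable_evenLam (Q := Q) (hY.const_mul θ) (hθg hY1)).const_mul c
  have iZ := (integrable_evenLam (Q := Q) (hZ.const_mul θ) (hθg hZ1)).const_mul d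
  have iXY : Integrable (fun z => evenLam (θ * X z) + c * evenLam (θ * Y z)) Q := iX.add iY
  rw [integral_sub iXY iZ, integral_add iX iY, integral_const_mul, integral_const_mul]
  exact ((hasSum_integral_evenLam hθ hX hX1).add
    ((hasSum_integral_evenLam hθ hY hY1).mul_left c)).sub
    ((hasSum_integral_evenLam hθ hZ hZ1).mul_left d)

variable {α : Type*} [MeasurableSpace α] (ν : Measure α) [IsProbabilityMeasure ν]

theorem integral_finset_prod_eq_pow {ι : Type*} [Fintype ι] [DecidableEq ι] (f : α → ℝ)
    (t : Finset ι) : ∫ x : ι → α, ∏ i ∈ t, f (x i) ∂Measure.pi (fun _ => ν)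
      = (∫ a, f a ∂ν) ^ t.card := by
  have h := integral_fintype_prod_eq_prod (μ := fun _ : ι => ν)
    (fun i a => if i ∈ t then f a else 1)
  have hint : ∀ i, ∫ a, (if i ∈ t then f a else 1) ∂ν = if i ∈ t then ∫ a, f a ∂ν else 1 := by
    intro i; split_ifs <;> simp
  simp only [hint, prod_ite_mem, univ_inter, prod_const] at h
  simpa only [prod_ite_mem, univ_inter] using h

variable (ν' : Measure α) [IsProbabilityMeasure ν']

theorem integral_mul_prod_erase {ι : Type*} [Fintype ι] [DecidableEq ι] (g : α → ℝ) (i₀ : ι) :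
    ∫ z : (ι → α) × (ι → α), g (z.1 i₀) * ∏ i ∈ univ.erase i₀, g (z.2 i)
        ∂(Measure.pi fun _ => ν).prod (Measure.pi fun _ => ν')
      = (∫ a, g a ∂ν) * (∫ a, g a ∂ν') ^ (Fintype.card ι - 1) := by
  have h₀ := integral_finset_prod_eq_pow ν g {i₀}
  simp only [prod_singleton, card_singleton, pow_one] at h₀
  rw [integral_prod_mul (fun x : ι → α => g (x i₀)) fun y : ι → α => ∏ i ∈ univ.erase i₀, g (y i),
    h₀, integral_finset_prod_eq_pow, card_erase_of_mem (mem_univ i₀), card_univ]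

theorem integral_evenLam_combination_nonneg {k : ℕ} {f : α → ℝ} (hf : Measurable f)
    (hf1 : ∀ a, |f a| ≤ 1) {θ : ℝ} (hθ : |θ| < 1) (i₀ : Fin k) :
    0 ≤ ∫ z : (Fin k → α) × (Fin k → α),
      (evenLam (θ * ∏ i, f (z.1 i)) + ((k : ℝ) - 1) * evenLam (θ * ∏ i, f (z.2 i))
        - k * evenLam (θ * (f (z.1 i₀) * ∏ i ∈ univ.erase i₀, f (z.2 i))))
      ∂(Measure.pi fun _ => ν).prod (Measure.pi fun _ => ν') := by
  have hsum := hasSum_integral_evenLam_add_sub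
    (Q := (Measure.pi fun _ : Fin k => ν).prod (Measure.pi fun _ : Fin k => ν')) hθ
    (X := fun z => ∏ i, f (z.1 i)) (Y := fun z => ∏ i, f (z.2 i))
    (Z := fun z => f (z.1 i₀) * ∏ i ∈ univ.erase i₀, f (z.2 i))
    (by fun_prop) (by fun_prop) (by fun_prop) (fun z => abs_prod_le_one hf1 _ _)
    (fun z => abs_prod_le_one hf1 _ _)
    (fun z => by
      rw [abs_mul]; exact mul_le_one₀ (hf1 _) (abs_nonneg _) (abs_prod_le_one hf1 _ _))
    ((k : ℝ) - 1) k
  refine hsum.nonneg fun n => ?_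
  simp only [mul_pow, ← prod_pow,
    integral_fun_fst fun x : Fin k → α => ∏ i, f (x i) ^ (2 * n + 2),
    integral_fun_snd fun x : Fin k → α => ∏ i, f (x i) ^ (2 * n + 2),
    integral_mul_prod_erase ν ν' fun x => f x ^ (2 * n + 2),
    integral_finset_prod_eq_pow ν fun x => f x ^ (2 * n + 2),
    integral_finset_prod_eq_pow ν' fun x => f x ^ (2 * n + 2),
    probReal_univ, one_smul, card_univ, Fintype.card_fin]
  have hw : 0 ≤ evenLamCoeff n * θ ^ (2 * n + 2) :=
    mul_nonneg (evenLamCoeff_nonneg n) (Even.pow_nonneg ⟨n + 1, by ring⟩ θ)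
  have heven : ∀ x : ℝ, 0 ≤ x ^ (2 * n + 2) := Even.pow_nonneg ⟨n + 1, by ring⟩
  have := mul_mul_pow_pred_le k (integral_nonneg (μ := ν) fun x => heven (f x))
    (integral_nonneg (μ := ν') fun x => heven (f x))
  nlinarith [mul_nonneg hw (sub_nonneg.2 this)]

end Integrals

theorem abs_sval_mul_le {θ g : ℝ} (hθ : |θ| ≤ 1) (hg : |g| ≤ 1) (s : Bool) :
    |sval s * θ * g| ≤ 1 := by
  have hs : |sval s| = 1 := by cases s <;> simp [sval]
  rw [abs_mul, abs_mul, hs, one_mul]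
  exact mul_le_one₀ hθ (abs_nonneg g) hg

theorem sum_half_integral_integral_lam_eq {A B : Type*} [MeasurableSpace A] [MeasurableSpace B]
    {P : Measure A} {P' : Measure B} [IsProbabilityMeasure P] [IsProbabilityMeasure P']
    {g₁ : A → ℝ} {g₂ : B → ℝ} {g₃ : A → B → ℝ} (hg₁ : Measurable g₁) (hg₂ : Measurable g₂)
    (hg₃ : Measurable (Function.uncurry g₃)) (hg₁1 : ∀ x, |g₁ x| ≤ 1) (hg₂1 : ∀ y, |g₂ y| ≤ 1)
    (hg₃1 : ∀ x y, |g₃ x y| ≤ 1) {θ : ℝ} (hθ : |θ| ≤ 1) (c d : ℝ) :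
    ∑ s : Bool, (1 / 2 : ℝ) * ∫ x, ∫ y, (Lam (1 + sval s * θ * g₁ x)
        + c * Lam (1 + sval s * θ * g₂ y) - d * Lam (1 + sval s * θ * g₃ x y)) ∂P' ∂P
      = ∫ z, (evenLam (θ * g₁ z.1) + c * evenLam (θ * g₂ z.2)
        - d * evenLam (θ * g₃ z.1 z.2)) ∂P.prod P' := by
  have hint : ∀ s : Bool, Integrable (fun z : A × B => Lam (1 + sval s * θ * g₁ z.1)
      + c * Lam (1 + sval s * θ * g₂ z.2) - d * Lam (1 + sval s * θ * g₃ z.1 z.2)) (P.prod P') :=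
    fun s => ((integrable_lam_one_add (measurable_const.mul (hg₁.comp measurable_fst))
        fun z => abs_sval_mul_le hθ (hg₁1 z.1) s).add
      ((integrable_lam_one_add (measurable_const.mul (hg₂.comp measurable_snd))
        fun z => abs_sval_mul_le hθ (hg₂1 z.2) s).const_mul c)).sub
      ((integrable_lam_one_add (measurable_const.mul hg₃)
        fun z => abs_sval_mul_le hθ (hg₃1 z.1 z.2) s).const_mul d)
  simp only [← integral_prod _ (hint _), ← integral_const_mul]
  rw [← integral_finsetSum _ fun s _ => (hint s).const_mul _]
  refine integral_congr_ae (ae_of_all _ fun z => ?_)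
  simp only [Fintype.sum_bool, sval, if_true, Bool.false_eq_true, if_false, evenLam]
  ring_nf

def bias (μ : ProbVec Bool) : ℝ := μ.1 true - μ.1 false

theorem probVec_true_add_false (μ : ProbVec Bool) : μ.1 true + μ.1 false = 1 := by
  simpa only [Fintype.sum_bool] using μ.2.2

theorem abs_bias_le_one (μ : ProbVec Bool) : |bias μ| ≤ 1 := by
  have := probVec_true_add_false μ
  have := μ.2.1 true
  have := μ.2.1 false
  rw [bias, abs_le]; constructor <;> linarith

@[fun_prop]
theorem measurable_bias : Measurable bias :=
  ((measurable_pi_apply true).comp measurable_subtype_coe).sub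
    ((measurable_pi_apply false).comp measurable_subtype_coe)

theorem sum_half_mul_ldgmW (k : ℕ) (η : ℝ) (τ : Fin k → Bool) :
    ∑ s : Bool, (1 / 2 : ℝ) * ldgmW k η s τ = 1 := by
  simp only [Fintype.sum_bool, ldgmW, sval, if_true, Bool.false_eq_true, if_false]
  ring

theorem sum_ldgmW_mul_prod {k : ℕ} (η : ℝ) (s : Bool) (F : Fin k → Bool → ℝ)
    (hF : ∀ i, F i true + F i false = 1) :
    ∑ τ : Fin k → Bool, ldgmW k η s τ * ∏ i, F i (τ i)
      = 1 + sval s * (1 - 2 * η) * ∏ i, (F i true - F i false) := by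
  have hτ : ∀ τ : Fin k → Bool, ldgmW k η s τ * ∏ i, F i (τ i)
      = ∏ i, F i (τ i) + sval s * (1 - 2 * η) * ∏ i, (sval (τ i) * F i (τ i)) := fun τ => by
    rw [ldgmW, add_mul, one_mul, mul_assoc, ← prod_mul_distrib]
  rw [sum_congr rfl fun τ _ => hτ τ, sum_add_distrib, ← mul_sum, ← Fintype.prod_sum,
    ← Fintype.prod_sum fun i b => sval b * F i b]
  simp [hF, sval, sub_eq_add_neg]

theorem prod_update_eq_mul_prod_erase {ι M N : Type*} [Fintype ι] [DecidableEq ι]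
    [CommMonoid N] (φ : ι → M → N) (g : ι → M) (i₀ : ι) (c : M) :
    ∏ i, φ i (Function.update g i₀ c i) = φ i₀ c * ∏ i ∈ univ.erase i₀, φ i (g i) := by
  rw [← mul_prod_erase _ _ (mem_univ i₀), Function.update_self]
  congr 1
  exact prod_congr rfl fun i hi => by rw [Function.update_of_ne (ne_of_mem_erase hi)]

theorem sum_ldgmW_mul_prod_probVec {k : ℕ} (η : ℝ) (s : Bool) (μ : Fin k → ProbVec Bool) :
    ∑ τ : Fin k → Bool, ldgmW k η s τ * ∏ i, (μ i).1 (τ i)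
      = 1 + sval s * (1 - 2 * η) * ∏ i, bias (μ i) :=
  sum_ldgmW_mul_prod η s _ fun i => probVec_true_add_false (μ i)

theorem sum_ldgmW_mul_mul_prod_erase {k : ℕ} (η : ℝ) (s : Bool) (μ μ' : Fin k → ProbVec Bool)
    (i₀ : Fin k) :
    ∑ τ : Fin k → Bool, ldgmW k η s τ * ((μ i₀).1 (τ i₀) * ∏ i ∈ univ.erase i₀, (μ' i).1 (τ i))
      = 1 + sval s * (1 - 2 * η) * (bias (μ i₀) * ∏ i ∈ univ.erase i₀, bias (μ' i)) := by
  calc _ = ∑ τ : Fin k → Bool, ldgmW k η s τ * ∏ i, (Function.update μ' i₀ (μ i₀) i).1 (τ i) :=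
        sum_congr rfl fun τ _ => by
          rw [prod_update_eq_mul_prod_erase fun i (ν : ProbVec Bool) => ν.1 (τ i)]
    _ = _ := by
        rw [sum_ldgmW_mul_prod_probVec, prod_update_eq_mul_prod_erase fun _ => bias]

theorem ldgm_pos {k : ℕ} (hk : 0 < k) {η : ℝ} (hη : η ∈ Set.Ioo (0 : ℝ) (1 / 2)) :
    POS k hk (ldgmW k η) fun _ => (1 / 2 : ℝ) := by
  intro π π' hπ hπ'
  have := hπ.1
  have := hπ'.1
  have hθ : |1 - 2 * η| < 1 := abs_lt.mpr ⟨by linarith [hη.2], by linarith [hη.1]⟩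
  set i₀ : Fin k := ⟨0, hk⟩
  have hmix : ∀ x y : Fin k → ProbVec Bool, |bias (x i₀) * ∏ i ∈ univ.erase i₀, bias (y i)| ≤ 1 :=
    fun x y => by
      rw [abs_mul]; exact mul_le_one₀ (abs_bias_le_one _) (abs_nonneg _)
        (abs_prod_le_one abs_bias_le_one _ _)
  simp only [sum_ldgmW_mul_prod_probVec, sum_ldgmW_mul_mul_prod_erase, piPV]
  rw [sum_half_integral_integral_lam_eq (g₁ := fun x : Fin k → ProbVec Bool => ∏ i, bias (x i))
    (g₂ := fun y : Fin k → ProbVec Bool => ∏ i, bias (y i))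
    (g₃ := fun x y : Fin k → ProbVec Bool => bias (x i₀) * ∏ i ∈ univ.erase i₀, bias (y i))
    (by fun_prop) (by fun_prop) (by fun_prop) (abs_prod_le_one abs_bias_le_one _)
    (abs_prod_le_one abs_bias_le_one _) hmix hθ.le]
  exact integral_evenLam_combination_nonneg π π' measurable_bias abs_bias_le_one hθ i₀

theorem xi_ldgmW (k : ℕ) (η : ℝ) : xi k (ldgmW k η) (fun _ => (1 / 2 : ℝ)) = 1 := by
  simp only [xi, sum_half_mul_ldgmW, sum_const, card_univ, Fintype.card_fun, Fintype.card_bool,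
    Fintype.card_fin, nsmul_eq_mul, mul_one]
  push_cast
  exact div_self (pow_ne_zero k two_ne_zero)

end TS

open TS in
/-- **LDGM codes satisfy SYM and POS.** For `Ω={±1}`, `Ψ={ψ_1,ψ_{−1}}` with
`ψ_s(σ)=1+s(1−2η)∏σ_i` and uniform prior `p`, one has (i) `E[ψ(σ)]=1` for all `σ` (so SYM
holds with `ξ=1`), and (ii) POS holds. -/
theorem ldgm_sym_and_pos (k : ℕ) (hk : 1 ≤ k) (η : ℝ) (hη : η ∈ Set.Ioo (0 : ℝ) (1 / 2)) :
    (∀ τ : Fin k → Bool, ∑ s : Bool, (1 / 2 : ℝ) * TS.ldgmW k η s τ = 1) ∧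
      TS.xi k (TS.ldgmW k η) (fun _ => (1 / 2 : ℝ)) = 1 ∧
      TS.SYM k (TS.ldgmW k η) (fun _ => (1 / 2 : ℝ)) ∧
      TS.POS k hk (TS.ldgmW k η) (fun _ => (1 / 2 : ℝ)) :=
  ⟨sum_half_mul_ldgmW k η, xi_ldgmW k η,
    fun τ => (sum_half_mul_ldgmW k η τ).trans (xi_ldgmW k η).symm, ldgm_pos hk hη⟩
end
end

section
/- For any finite set Ω, any ε>0 there is T=T(ε,Ω)>0 such that for every n>T and every probability measure μ on Ω^n the following holds. Draw σ̌ from μ, draw θ uniform on (0,T), and obtain a random set U⊆[n] by including each i∈[n] independently with probability θ/n; define the conditioned measure μ̌(σ) = μ(σ)·1{σ_i=σ̌_i for all i∈U} / μ({τ: τ_i=σ̌_i for all i∈U}). Then with probability at least 1−ε, μ̌ is ε-symmetric, i.e. (1/n²)∑_{x_1,x_2∈[n]} ‖μ̌_{x_1,x_2} − μ̌_{x_1}⊗μ̌_{x_2}‖_TV < ε, where μ̌_{x_1,x_2} and μ̌_x denote the joint and single-coordinate marginals of μ̌. -/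
open MeasureTheory
open scoped BigOperators Classical

noncomputable section

namespace Pinning

variable {Ω : Type*} [Fintype Ω]

/-- the measure `μ̌` obtained from `μ` by conditioning the coordinates in `U` to agree
with `σc`. -/
def condMass (n : ℕ) (μ : (Fin n → Ω) → ℝ) (U : Finset (Fin n)) (σc : Fin n → Ω)
    (σ : Fin n → Ω) : ℝ :=
  (if ∀ i ∈ U, σ i = σc i then μ σ else 0) /
    ∑ τ : Fin n → Ω, if ∀ i ∈ U, τ i = σc i then μ τ else 0

/-- single-coordinate marginal of a mass function on `Ω^n`. -/
def marg1 (n : ℕ) (ν : (Fin n → Ω) → ℝ) (x : Fin n) (a : Ω) : ℝ :=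
  ∑ σ : Fin n → Ω, if σ x = a then ν σ else 0

/-- two-coordinate marginal of a mass function on `Ω^n`. -/
def marg2 (n : ℕ) (ν : (Fin n → Ω) → ℝ) (x₁ x₂ : Fin n) (a b : Ω) : ℝ :=
  ∑ σ : Fin n → Ω, if σ x₁ = a ∧ σ x₂ = b then ν σ else 0

/-- `ν` is `ε`-symmetric: `(1/n²) ∑_{x₁,x₂} ‖ν_{x₁,x₂} − ν_{x₁}⊗ν_{x₂}‖_TV < ε`,
where `‖f−g‖_TV = ∑ (f−g)₊`. -/
def epsSym (n : ℕ) (ν : (Fin n → Ω) → ℝ) (ε : ℝ) : Prop :=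
  ((n : ℝ) ^ 2)⁻¹ * ∑ x₁ : Fin n, ∑ x₂ : Fin n,
      (∑ a : Ω, ∑ b : Ω,
        max (marg2 n ν x₁ x₂ a b - marg1 n ν x₁ a * marg1 n ν x₂ b) 0) < ε

end Pinning

/-!
The potential `Φ(U) = E_σ ∑ₓ ‖μ̌ₓ‖₂²` (`expectedMargSqSum`: squared `ℓ²` norms of the
single-site marginals of the measure pinned on `U`) lies in `[0, n]`. By the law of total
variance, pinning one more coordinate `y` raises it by the expected `ℓ²` movement `∑ₓ D(x, y)`
(`pinGain`) of the marginals, and by AM-GM `D(x, y)` controls the correlation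
`‖μ̌_{xy} − μ̌ₓ ⊗ μ̌_y‖_TV` up to a small additive error. Russo's formula identifies
`(1 − θ/n) · d/dθ (n · E_θ Φ(U))` with the expected total gain `∑_{x,y} D(x, y)`, so its integral
over `θ ∈ (0, T)` is at most `n²`; Markov's inequality then bounds the probability that `μ̌` is
not `ε`-symmetric, with `T = (|Ω| + 1) / ε⁴`.
-/

lemma Finset.sum_mul_sq_eq_sq_add_sum_mul_sq {β : Type*} (s : Finset β) (q m : β → ℝ)
    (hq : ∑ b ∈ s, q b = 1) :
    ∑ b ∈ s, q b * m b ^ 2 =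
      (∑ b ∈ s, q b * m b) ^ 2 + ∑ b ∈ s, q b * (m b - ∑ c ∈ s, q c * m c) ^ 2 := by
  set M := ∑ c ∈ s, q c * m c
  have hexpand : ∀ b, q b * (m b - M) ^ 2 = q b * m b ^ 2 - 2 * M * (q b * m b) + M ^ 2 * q b :=
    fun b => by ring
  simp only [hexpand, Finset.sum_add_distrib, Finset.sum_sub_distrib, ← Finset.mul_sum, hq]
  ring

section BernoulliWeight

variable {ι : Type*} [Fintype ι] [DecidableEq ι]

def bernoulliWeight (p : ℝ) (U : Finset ι) : ℝ :=
  (∏ _i ∈ U, p) * ∏ _i ∈ Uᶜ, (1 - p)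

lemma bernoulliWeight_eq_prod (p : ℝ) (U : Finset ι) :
    bernoulliWeight p U = ∏ i, if i ∈ U then p else 1 - p := by
  rw [← Finset.prod_mul_prod_compl U, bernoulliWeight]
  congr 1 <;> refine Finset.prod_congr rfl fun i hi => ?_
  · rw [if_pos hi]
  · rw [if_neg (Finset.mem_compl.mp hi)]

lemma sum_bernoulliWeight (p : ℝ) : ∑ U : Finset ι, bernoulliWeight p U = 1 := by
  simp only [bernoulliWeight, ← Fintype.prod_add, add_sub_cancel, Finset.prod_const_one]

lemma bernoulliWeight_nonneg {p : ℝ} (hp₀ : 0 ≤ p) (hp₁ : p ≤ 1) (U : Finset ι) :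
    0 ≤ bernoulliWeight p U :=
  mul_nonneg (Finset.prod_nonneg fun _ _ => hp₀) (Finset.prod_nonneg fun _ _ => by linarith)

lemma one_sub_mul_prod_erase_eq_bernoulliWeight (p : ℝ) (U : Finset ι) (y : ι) :
    (1 - p) * ∏ j ∈ Finset.univ.erase y, (if j ∈ U then p else 1 - p) =
      bernoulliWeight p (U.erase y) := by
  rw [bernoulliWeight_eq_prod, ← Finset.mul_prod_erase _ _ (Finset.mem_univ y)]
  congr 1
  · simp
  · refine Finset.prod_congr rfl fun j hj => ?_
    simp [Finset.ne_of_mem_erase hj]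

lemma sum_finset_eq_sum_powerset_erase (y : ι) (F : Finset ι → ℝ) :
    ∑ U, F U = ∑ t ∈ (Finset.univ.erase y).powerset, (F t + F (insert y t)) := by
  rw [Finset.sum_add_distrib, ← Finset.sum_powerset_insert (Finset.notMem_erase y _),
    Finset.insert_erase (Finset.mem_univ y), Finset.powerset_univ]

/-- Russo's formula for the `p`-biased product measure on subsets of `ι`. -/
theorem hasDerivAt_sum_bernoulliWeight_mul (g : Finset ι → ℝ) {p : ℝ} (hp : p ≠ 1) :
    HasDerivAt (fun p => ∑ U, bernoulliWeight p U * g U)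
      ((1 - p)⁻¹ * ∑ y, ∑ V, bernoulliWeight p V * (g (insert y V) - g V)) p := by
  have hfactor : ∀ (U : Finset ι) (j : ι), HasDerivAt (fun p : ℝ => if j ∈ U then p else 1 - p)
      (if j ∈ U then 1 else -1) p := fun U j => by
    split_ifs
    · exact hasDerivAt_id p
    · simpa using (hasDerivAt_id p).const_sub 1
  have hderiv := HasDerivAt.fun_sum fun U (_ : U ∈ Finset.univ) =>
    (HasDerivAt.fun_finsetProd fun j (_ : j ∈ Finset.univ) => hfactor U j).mul_const (g U)
  simp only [← bernoulliWeight_eq_prod] at hderiv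
  refine hderiv.congr_deriv ?_
  symm
  rw [inv_mul_eq_iff_eq_mul₀ (sub_ne_zero.mpr hp.symm), Finset.mul_sum]
  simp only [Finset.sum_mul, Finset.mul_sum, smul_eq_mul]
  conv_rhs => rw [Finset.sum_comm]
  refine Finset.sum_congr rfl fun y _ => ?_
  -- Pair each `t ∌ y` with `insert y t`; `(1 - p) * ∏_{j ≠ y}` is then the weight of `t`.
  rw [sum_finset_eq_sum_powerset_erase y, sum_finset_eq_sum_powerset_erase y]
  refine Finset.sum_congr rfl fun t ht => ?_
  have hyt : y ∉ t := fun h => Finset.notMem_erase y _ (Finset.mem_powerset.mp ht h)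
  have hw := one_sub_mul_prod_erase_eq_bernoulliWeight p t y
  have hw' := one_sub_mul_prod_erase_eq_bernoulliWeight p (insert y t) y
  rw [Finset.erase_insert hyt] at hw'
  rw [Finset.erase_eq_of_notMem hyt] at hw
  simp only [Finset.insert_idem, sub_self, mul_zero, add_zero, if_neg hyt,
    if_pos (Finset.mem_insert_self y t)]
  linear_combination g t * hw - g (insert y t) * hw'

end BernoulliWeight

namespace Pinning

variable {Ω : Type*} {n : ℕ}

def pinMass (μ : (Fin n → Ω) → ℝ) (U : Finset (Fin n)) (σc σ : Fin n → Ω) : ℝ :=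
  if ∀ i ∈ U, σ i = σc i then μ σ else 0

section PinMass

variable {μ : (Fin n → Ω) → ℝ} {U : Finset (Fin n)} {σc : Fin n → Ω}

lemma pinMass_nonneg (hμ : ∀ σ, 0 ≤ μ σ) (σ : Fin n → Ω) : 0 ≤ pinMass μ U σc σ := by
  unfold pinMass; split_ifs; exacts [hμ σ, le_rfl]

lemma pinMass_congr {σc' : Fin n → Ω} (h : ∀ i ∈ U, σc i = σc' i) :
    pinMass μ U σc = pinMass μ U σc' := by
  funext σ
  refine if_congr ⟨fun hσ i hi => (hσ i hi).trans (h i hi),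
    fun hσ i hi => (hσ i hi).trans (h i hi).symm⟩ rfl rfl

lemma pinMass_insert_update {y : Fin n} {b : Ω} (hyb : y ∈ U → b = σc y) :
    pinMass μ (insert y U) (Function.update σc y b) =
      fun σ => if σ y = b then pinMass μ U σc σ else 0 := by
  have hU : ∀ i ∈ U, Function.update σc y b i = σc i := fun i hi => by
    rcases eq_or_ne i y with rfl | hne
    · simp [hyb hi]
    · exact Function.update_of_ne hne _ _
  funext σ
  have hU' : (∀ i ∈ U, σ i = Function.update σc y b i) ↔ ∀ i ∈ U, σ i = σc i :=
    forall₂_congr fun i hi => by rw [hU i hi]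
  simp only [pinMass, Finset.forall_mem_insert, Function.update_self, hU', ← ite_and]

end PinMass

variable [Fintype Ω]

section Marginals

variable (ν : (Fin n → Ω) → ℝ)

lemma marg1_div_const (c : ℝ) (x : Fin n) (a : Ω) :
    marg1 n (fun σ => ν σ / c) x a = marg1 n ν x a / c := by
  simp only [marg1, Finset.sum_div, ite_div, zero_div]

lemma marg2_div_const (c : ℝ) (x y : Fin n) (a b : Ω) :
    marg2 n (fun σ => ν σ / c) x y a b = marg2 n ν x y a b / c := by
  simp only [marg2, Finset.sum_div, ite_div, zero_div]

lemma sum_marg1 (x : Fin n) : ∑ a, marg1 n ν x a = ∑ σ, ν σ := by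
  simp only [marg1]
  rw [Finset.sum_comm]
  simp

lemma sum_marg2 (x y : Fin n) (a : Ω) : ∑ b, marg2 n ν x y a b = marg1 n ν x a := by
  simp only [marg2, marg1]
  rw [Finset.sum_comm]
  refine Finset.sum_congr rfl fun σ _ => ?_
  by_cases h : σ x = a <;> simp [h]

lemma marg1_restrict (x y : Fin n) (a b : Ω) :
    marg1 n (fun σ => if σ y = b then ν σ else 0) x a = marg2 n ν x y a b := by
  simp only [marg1, marg2, ← ite_and]

variable {ν}

lemma marg1_nonneg (hν : ∀ σ, 0 ≤ ν σ) (x : Fin n) (a : Ω) : 0 ≤ marg1 n ν x a :=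
  Finset.sum_nonneg fun σ _ => by split_ifs; exacts [hν σ, le_rfl]

lemma marg2_nonneg (hν : ∀ σ, 0 ≤ ν σ) (x y : Fin n) (a b : Ω) : 0 ≤ marg2 n ν x y a b :=
  Finset.sum_nonneg fun σ _ => by split_ifs; exacts [hν σ, le_rfl]

lemma marg2_le_marg1 (hν : ∀ σ, 0 ≤ ν σ) (x y : Fin n) (a b : Ω) :
    marg2 n ν x y a b ≤ marg1 n ν y b :=
  Finset.sum_le_sum fun σ _ => by split_ifs <;> first | exact le_rfl | exact hν σ | tauto

lemma marg2_eq_zero_of_marg1_eq_zero (hν : ∀ σ, 0 ≤ ν σ) {x y : Fin n} {a b : Ω}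
    (h : marg1 n ν y b = 0) : marg2 n ν x y a b = 0 :=
  le_antisymm (h ▸ marg2_le_marg1 hν x y a b) (marg2_nonneg hν x y a b)

lemma marg1_le_sum (hν : ∀ σ, 0 ≤ ν σ) (x : Fin n) (a : Ω) : marg1 n ν x a ≤ ∑ σ, ν σ :=
  Finset.sum_le_sum fun σ _ => by split_ifs; exacts [le_rfl, hν σ]

end Marginals

variable {μ : (Fin n → Ω) → ℝ} {U : Finset (Fin n)} {σc : Fin n → Ω}

lemma condMass_eq_pinMass_div :
    condMass n μ U σc = fun σ => pinMass μ U σc σ / ∑ τ, pinMass μ U σc τ := rfl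

lemma condMass_dependsOn (μ : (Fin n → Ω) → ℝ) (U : Finset (Fin n)) :
    DependsOn (fun σc => condMass n μ U σc) U := fun _ _ h => by
  simp only [condMass_eq_pinMass_div, pinMass_congr (μ := μ) h]

lemma condMass_nonneg (hμ : ∀ σ, 0 ≤ μ σ) (σ : Fin n → Ω) : 0 ≤ condMass n μ U σc σ :=
  div_nonneg (pinMass_nonneg hμ σ) (Finset.sum_nonneg fun τ _ => pinMass_nonneg hμ τ)

lemma sum_condMass_le_one : ∑ σ, condMass n μ U σc σ ≤ 1 := by
  rw [condMass_eq_pinMass_div, ← Finset.sum_div]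
  exact div_self_le_one _

lemma sum_condMass_eq_one (hμ : ∀ σ, 0 ≤ μ σ) (hσc : μ σc ≠ 0) :
    ∑ σ, condMass n μ U σc σ = 1 := by
  have hle : μ σc ≤ ∑ τ, pinMass μ U σc τ := by
    simpa [pinMass] using Finset.single_le_sum (fun τ _ => pinMass_nonneg (U := U) (σc := σc) hμ τ)
      (Finset.mem_univ σc)
  rw [condMass_eq_pinMass_div, ← Finset.sum_div, div_self]
  exact (lt_of_lt_of_le ((hμ σc).lt_of_ne' hσc) hle).ne'

/-- Pinning `y` to `b` is conditioning on `σ y = b`. -/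
lemma marg1_mul_marg1_insert_update (hμ : ∀ σ, 0 ≤ μ σ) (x y : Fin n) (a b : Ω) :
    marg1 n (condMass n μ U σc) y b *
        marg1 n (condMass n μ (insert y U) (Function.update σc y b)) x a =
      marg2 n (condMass n μ U σc) x y a b := by
  have hP := pinMass_nonneg (μ := μ) (U := U) (σc := σc) hμ
  by_cases hyb : y ∈ U → b = σc y
  · have hZ : ∑ σ, (if σ y = b then pinMass μ U σc σ else 0) = marg1 n (pinMass μ U σc) y b :=
      rfl
    simp only [condMass_eq_pinMass_div, pinMass_insert_update hyb, marg1_div_const,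
      marg2_div_const, marg1_restrict, hZ]
    rcases eq_or_ne (marg1 n (pinMass μ U σc) y b) 0 with h0 | h0
    · simp [h0, marg2_eq_zero_of_marg1_eq_zero hP h0]
    · rw [div_mul_div_comm, mul_comm, mul_div_mul_right _ _ h0]
  · -- `y` is already pinned to a value other than `b`, so both sides vanish.
    push Not at hyb
    have h0 : marg1 n (pinMass μ U σc) y b = 0 :=
      Finset.sum_eq_zero fun σ _ => by
        unfold pinMass
        split_ifs with h1 h2 <;> first | rfl | exact absurd (h1.symm.trans (h2 y hyb.1)) hyb.2
    simp [condMass_eq_pinMass_div, marg1_div_const, marg2_div_const, h0,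
      marg2_eq_zero_of_marg1_eq_zero hP h0]

lemma mul_condMass_comm (V : Finset (Fin n)) (σ τ : Fin n → Ω) :
    μ σ * condMass n μ V σ τ = μ τ * condMass n μ V τ σ := by
  show μ σ * (pinMass μ V σ τ / ∑ ρ, pinMass μ V σ ρ) =
    μ τ * (pinMass μ V τ σ / ∑ ρ, pinMass μ V τ ρ)
  by_cases h : ∀ i ∈ V, τ i = σ i
  · rw [pinMass_congr (μ := μ) h]
    simp only [pinMass, if_pos h, implies_true, if_true]
    ring
  · have h' : ¬ ∀ i ∈ V, σ i = τ i := fun h' => h fun i hi => (h' i hi).symm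
    simp [pinMass, h, h']

lemma sum_mul_sum_condMass_mul (hμ : ∀ σ, 0 ≤ μ σ) (V : Finset (Fin n))
    (F : (Fin n → Ω) → ℝ) :
    ∑ σ, μ σ * ∑ τ, condMass n μ V σ τ * F τ = ∑ σ, μ σ * F σ := by
  calc ∑ σ, μ σ * ∑ τ, condMass n μ V σ τ * F τ
      = ∑ σ, ∑ τ, μ τ * F τ * condMass n μ V τ σ := by
        refine Finset.sum_congr rfl fun σ _ => ?_
        rw [Finset.mul_sum]
        refine Finset.sum_congr rfl fun τ _ => ?_
        rw [← mul_assoc, mul_condMass_comm]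
        ring
    _ = ∑ τ, μ τ * F τ * ∑ σ, condMass n μ V τ σ := by
        rw [Finset.sum_comm]
        simp only [Finset.mul_sum]
    _ = ∑ σ, μ σ * F σ := by
        refine Finset.sum_congr rfl fun τ _ => ?_
        rcases eq_or_ne (μ τ) 0 with h | h
        · simp [h]
        · rw [sum_condMass_eq_one hμ h, mul_one]

lemma sum_marg1_condMass_mul_update {y : Fin n} {V : Finset (Fin n)} (σ : Fin n → Ω)
    {h : (Fin n → Ω) → ℝ} (hh : DependsOn h (insert y V : Finset (Fin n))) :
    ∑ b, marg1 n (condMass n μ V σ) y b * h (Function.update σ y b) =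
      ∑ τ, condMass n μ V σ τ * h τ := by
  simp only [marg1, Finset.sum_mul, ite_mul, zero_mul]
  rw [Finset.sum_comm]
  refine Finset.sum_congr rfl fun τ _ => ?_
  rw [Finset.sum_ite_eq]
  simp only [Finset.mem_univ, if_true]
  by_cases hτ : ∀ i ∈ V, τ i = σ i
  · congr 1
    refine hh fun i hi => ?_
    rcases eq_or_ne i y with rfl | hne
    · simp
    · rw [Function.update_of_ne hne]
      exact (hτ i (by simpa [hne] using hi)).symm
  · simp [condMass_eq_pinMass_div, pinMass, hτ]

def margSqSum (n : ℕ) (ν : (Fin n → Ω) → ℝ) : ℝ :=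
  ∑ x, ∑ a, marg1 n ν x a ^ 2

lemma margSqSum_nonneg (ν : (Fin n → Ω) → ℝ) : 0 ≤ margSqSum n ν :=
  Finset.sum_nonneg fun _ _ => Finset.sum_nonneg fun _ _ => sq_nonneg _

lemma margSqSum_le {ν : (Fin n → Ω) → ℝ} (hν : ∀ σ, 0 ≤ ν σ) (hν1 : ∑ σ, ν σ ≤ 1) :
    margSqSum n ν ≤ n := by
  have hrow : ∀ x, ∑ a, marg1 n ν x a ^ 2 ≤ 1 := fun x => calc
    ∑ a, marg1 n ν x a ^ 2 ≤ ∑ a, marg1 n ν x a := Finset.sum_le_sum fun a _ => by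
        have h0 := marg1_nonneg hν x a
        have h1 := (marg1_le_sum hν x a).trans hν1
        nlinarith
    _ ≤ 1 := (sum_marg1 ν x).trans_le hν1
  simpa [margSqSum] using Finset.sum_le_sum fun x (_ : x ∈ Finset.univ) => hrow x

def pinGain (μ : (Fin n → Ω) → ℝ) (U : Finset (Fin n)) (σc : Fin n → Ω) (x y : Fin n) : ℝ :=
  ∑ b, marg1 n (condMass n μ U σc) y b *
    ∑ a, (marg1 n (condMass n μ (insert y U) (Function.update σc y b)) x a -
      marg1 n (condMass n μ U σc) x a) ^ 2

lemma pinGain_nonneg (hμ : ∀ σ, 0 ≤ μ σ) (x y : Fin n) : 0 ≤ pinGain μ U σc x y :=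
  Finset.sum_nonneg fun _ _ => mul_nonneg (marg1_nonneg (condMass_nonneg hμ) _ _)
    (Finset.sum_nonneg fun _ _ => sq_nonneg _)

lemma sum_marg1_mul_margSqSum_insert_update (hμ : ∀ σ, 0 ≤ μ σ) (hσc : μ σc ≠ 0) (y : Fin n) :
    ∑ b, marg1 n (condMass n μ U σc) y b *
        margSqSum n (condMass n μ (insert y U) (Function.update σc y b)) =
      margSqSum n (condMass n μ U σc) + ∑ x, pinGain μ U σc x y := by
  set q := marg1 n (condMass n μ U σc) y
  set m := fun x a b => marg1 n (condMass n μ (insert y U) (Function.update σc y b)) x a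
  have hq : ∑ b, q b = 1 := (sum_marg1 _ y).trans (sum_condMass_eq_one hμ hσc)
  have hmean : ∀ x a, ∑ b, q b * m x a b = marg1 n (condMass n μ U σc) x a := fun x a => by
    simp only [q, m, marg1_mul_marg1_insert_update hμ, sum_marg2]
  calc ∑ b, q b * margSqSum n (condMass n μ (insert y U) (Function.update σc y b))
      = ∑ x, ∑ a, ∑ b, q b * m x a b ^ 2 := by
        simp only [margSqSum, Finset.mul_sum]
        rw [Finset.sum_comm]
        exact Finset.sum_congr rfl fun x _ => Finset.sum_comm
    _ = ∑ x, ∑ a, (marg1 n (condMass n μ U σc) x a ^ 2 +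
          ∑ b, q b * (m x a b - marg1 n (condMass n μ U σc) x a) ^ 2) := by
        refine Finset.sum_congr rfl fun x _ => Finset.sum_congr rfl fun a _ => ?_
        rw [Finset.sum_mul_sq_eq_sq_add_sum_mul_sq _ q _ hq, hmean]
    _ = margSqSum n (condMass n μ U σc) + ∑ x, pinGain μ U σc x y := by
        simp only [margSqSum, pinGain, Finset.sum_add_distrib, Finset.mul_sum]
        congr 1
        exact Finset.sum_congr rfl fun x _ => Finset.sum_comm

def expectedMargSqSum (μ : (Fin n → Ω) → ℝ) (U : Finset (Fin n)) : ℝ :=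
  ∑ σ, μ σ * margSqSum n (condMass n μ U σ)

lemma expectedMargSqSum_insert (hμ : ∀ σ, 0 ≤ μ σ) (y : Fin n) (U : Finset (Fin n)) :
    expectedMargSqSum μ (insert y U) =
      expectedMargSqSum μ U + ∑ σ, μ σ * ∑ x, pinGain μ U σ x y := by
  have hdep : DependsOn (fun σ => margSqSum n (condMass n μ (insert y U) σ))
      (insert y U : Finset (Fin n)) := fun _ _ h =>
    congrArg (margSqSum n) (condMass_dependsOn μ _ h)
  rw [expectedMargSqSum, ← sum_mul_sum_condMass_mul hμ U, expectedMargSqSum,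
    ← Finset.sum_add_distrib]
  refine Finset.sum_congr rfl fun σ _ => ?_
  rcases eq_or_ne (μ σ) 0 with h | h
  · simp [h]
  · rw [← sum_marg1_condMass_mul_update σ hdep, sum_marg1_mul_margSqSum_insert_update hμ h,
      mul_add]

lemma expectedMargSqSum_nonneg (hμ : ∀ σ, 0 ≤ μ σ) (U : Finset (Fin n)) :
    0 ≤ expectedMargSqSum μ U :=
  Finset.sum_nonneg fun σ _ => mul_nonneg (hμ σ) (margSqSum_nonneg _)

lemma expectedMargSqSum_le (hμ : ∀ σ, 0 ≤ μ σ) (hμ1 : ∑ σ, μ σ = 1) (U : Finset (Fin n)) :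
    expectedMargSqSum μ U ≤ n := calc
  expectedMargSqSum μ U ≤ ∑ σ, μ σ * n := Finset.sum_le_sum fun σ _ =>
      mul_le_mul_of_nonneg_left (margSqSum_le (condMass_nonneg hμ) sum_condMass_le_one) (hμ σ)
  _ = n := by rw [← Finset.sum_mul, hμ1, one_mul]

def pairTV (n : ℕ) (ν : (Fin n → Ω) → ℝ) (x₁ x₂ : Fin n) : ℝ :=
  ∑ a, ∑ b, max (marg2 n ν x₁ x₂ a b - marg1 n ν x₁ a * marg1 n ν x₂ b) 0

lemma epsSym_iff (ν : (Fin n → Ω) → ℝ) (ε : ℝ) :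
    epsSym n ν ε ↔ ((n : ℝ) ^ 2)⁻¹ * ∑ x₁, ∑ x₂, pairTV n ν x₁ x₂ < ε := Iff.rfl

lemma pairTV_nonneg (ν : (Fin n → Ω) → ℝ) (x₁ x₂ : Fin n) : 0 ≤ pairTV n ν x₁ x₂ :=
  Finset.sum_nonneg fun _ _ => Finset.sum_nonneg fun _ _ => le_max_right _ _

lemma pairTV_condMass_le (hμ : ∀ σ, 0 ≤ μ σ) {c : ℝ} (hc : 0 < c) (x y : Fin n) :
    pairTV n (condMass n μ U σc) x y ≤
      pinGain μ U σc x y / (2 * c) + Fintype.card Ω * c / 2 := by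
  set q := marg1 n (condMass n μ U σc) y
  set d := fun a b => marg1 n (condMass n μ (insert y U) (Function.update σc y b)) x a -
    marg1 n (condMass n μ U σc) x a
  have hq : ∀ b, 0 ≤ q b := marg1_nonneg (condMass_nonneg hμ) y
  have hamgm : ∀ u : ℝ, u ≤ u ^ 2 / (2 * c) + c / 2 := fun u => by
    rw [div_add_div _ _ (by positivity) two_ne_zero, le_div_iff₀ (by positivity)]
    nlinarith [sq_nonneg (u - c)]
  calc pairTV n (condMass n μ U σc) x y
      ≤ ∑ a, ∑ b, q b * (d a b ^ 2 / (2 * c) + c / 2) := by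
        refine Finset.sum_le_sum fun a _ => Finset.sum_le_sum fun b _ => ?_
        rw [← marg1_mul_marg1_insert_update hμ, ← mul_comm (q b), ← mul_sub]
        exact max_le (mul_le_mul_of_nonneg_left (hamgm _) (hq b))
          (mul_nonneg (hq b) (by positivity))
    _ = pinGain μ U σc x y / (2 * c) + Fintype.card Ω * c / 2 * ∑ b, q b := by
        simp only [pinGain, mul_add, Finset.sum_add_distrib, Finset.sum_const, Finset.card_univ,
          nsmul_eq_mul, Finset.mul_sum, Finset.sum_div]
        rw [Finset.sum_comm]
        congr 1
        · exact Finset.sum_congr rfl fun b _ => Finset.sum_congr rfl fun a _ => by ring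
        · exact Finset.sum_congr rfl fun b _ => by ring
    _ ≤ pinGain μ U σc x y / (2 * c) + Fintype.card Ω * c / 2 := by
        have hsum : ∑ b, q b ≤ 1 := (sum_marg1 _ y).trans_le sum_condMass_le_one
        have : 0 ≤ (Fintype.card Ω : ℝ) * c / 2 := by positivity
        nlinarith

lemma sum_pairTV_condMass_le (hμ : ∀ σ, 0 ≤ μ σ) {c : ℝ} (hc : 0 < c) :
    ((n : ℝ) ^ 2)⁻¹ * ∑ x₁, ∑ x₂, pairTV n (condMass n μ U σc) x₁ x₂ ≤
      ((n : ℝ) ^ 2)⁻¹ * (∑ x, ∑ y, pinGain μ U σc x y) / (2 * c) +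
        Fintype.card Ω * c / 2 := by
  have h := Finset.sum_le_sum fun x (_ : x ∈ Finset.univ) =>
    Finset.sum_le_sum fun y (_ : y ∈ Finset.univ) =>
      pairTV_condMass_le (U := U) (σc := σc) hμ hc x y
  simp only [Finset.sum_add_distrib, Finset.sum_const, Finset.card_univ, Fintype.card_fin,
    nsmul_eq_mul, ← Finset.sum_div] at h
  calc ((n : ℝ) ^ 2)⁻¹ * ∑ x₁, ∑ x₂, pairTV n (condMass n μ U σc) x₁ x₂
      ≤ ((n : ℝ) ^ 2)⁻¹ * ((∑ x, ∑ y, pinGain μ U σc x y) / (2 * c) +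
          n * (n * (Fintype.card Ω * c / 2))) := by gcongr
    _ = ((n : ℝ) ^ 2)⁻¹ * (∑ x, ∑ y, pinGain μ U σc x y) / (2 * c) +
          (((n : ℝ) ^ 2)⁻¹ * (n : ℝ) ^ 2) * (Fintype.card Ω * c / 2) := by ring
    _ ≤ _ := by
        have : 0 ≤ (Fintype.card Ω : ℝ) * c / 2 := by positivity
        nlinarith [inv_mul_le_one (G₀ := ℝ) (a := (n : ℝ) ^ 2)]

lemma one_sub_div_le_ite_lt {S ε : ℝ} (hS : 0 ≤ S) (hε : 0 < ε) :
    1 - S / ε ≤ if S < ε then 1 else 0 := by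
  split_ifs with h
  · linarith [div_nonneg hS hε.le]
  · rw [sub_nonpos, le_div_iff₀ hε]
    linarith [not_lt.mp h]

def pinExpect (μ : (Fin n → Ω) → ℝ) (p : ℝ) (X : (Fin n → Ω) → Finset (Fin n) → ℝ) : ℝ :=
  ∑ σ, μ σ * ∑ U, bernoulliWeight p U * X σ U

lemma pinExpect_mono (hμ : ∀ σ, 0 ≤ μ σ) {p : ℝ} (hp₀ : 0 ≤ p) (hp₁ : p ≤ 1)
    {X Y : (Fin n → Ω) → Finset (Fin n) → ℝ} (h : ∀ σ U, X σ U ≤ Y σ U) :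
    pinExpect μ p X ≤ pinExpect μ p Y :=
  Finset.sum_le_sum fun σ _ => mul_le_mul_of_nonneg_left (Finset.sum_le_sum fun U _ =>
    mul_le_mul_of_nonneg_left (h σ U) (bernoulliWeight_nonneg hp₀ hp₁ U)) (hμ σ)

lemma pinExpect_nonneg (hμ : ∀ σ, 0 ≤ μ σ) {p : ℝ} (hp₀ : 0 ≤ p) (hp₁ : p ≤ 1)
    {X : (Fin n → Ω) → Finset (Fin n) → ℝ} (hX : ∀ σ U, 0 ≤ X σ U) : 0 ≤ pinExpect μ p X :=
  Finset.sum_nonneg fun σ _ => mul_nonneg (hμ σ) (Finset.sum_nonneg fun U _ =>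
    mul_nonneg (bernoulliWeight_nonneg hp₀ hp₁ U) (hX σ U))

lemma pinExpect_const_sub_mul (hμ1 : ∑ σ, μ σ = 1) (p a b : ℝ)
    (X : (Fin n → Ω) → Finset (Fin n) → ℝ) :
    pinExpect μ p (fun σ U => a - b * X σ U) = a - b * pinExpect μ p X := by
  simp only [pinExpect, mul_sub, Finset.sum_sub_distrib, ← Finset.sum_mul, sum_bernoulliWeight,
    one_mul, hμ1, Finset.mul_sum, mul_left_comm b]

lemma continuous_pinExpect (X : (Fin n → Ω) → Finset (Fin n) → ℝ) :
    Continuous fun p => pinExpect μ p X := by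
  unfold pinExpect bernoulliWeight
  fun_prop

lemma pinExpect_sum_pinGain (hμ : ∀ σ, 0 ≤ μ σ) (p : ℝ) :
    pinExpect μ p (fun σ U => ∑ x, ∑ y, pinGain μ U σ x y) =
      ∑ y, ∑ U, bernoulliWeight p U *
        (expectedMargSqSum μ (insert y U) - expectedMargSqSum μ U) := by
  simp only [expectedMargSqSum_insert hμ, add_sub_cancel_left, pinExpect, Finset.mul_sum]
  rw [Finset.sum_comm]
  conv_rhs => rw [Finset.sum_comm]
  refine Finset.sum_congr rfl fun U _ => ?_
  conv_rhs => rw [Finset.sum_comm]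
  refine Finset.sum_congr rfl fun σ _ => ?_
  rw [Finset.sum_comm]
  exact Finset.sum_congr rfl fun y _ => Finset.sum_congr rfl fun x _ => by ring

lemma hasDerivAt_expectedMargSqSum (hμ : ∀ σ, 0 ≤ μ σ) (hn : (n : ℝ) ≠ 0) {θ : ℝ}
    (hθ : θ ≠ n) :
    HasDerivAt (fun θ => n * ∑ U, bernoulliWeight (θ / n) U * expectedMargSqSum μ U)
      ((1 - θ / n)⁻¹ * pinExpect μ (θ / n) fun σ U => ∑ x, ∑ y, pinGain μ U σ x y) θ := by
  have hp : θ / n ≠ 1 := fun h => hθ ((div_eq_one_iff_eq hn).mp h)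
  refine (((hasDerivAt_sum_bernoulliWeight_mul (expectedMargSqSum μ) hp).comp θ
    ((hasDerivAt_id θ).div_const (n : ℝ))).const_mul (n : ℝ)).congr_deriv ?_
  rw [pinExpect_sum_pinGain hμ]
  field_simp

lemma integral_pinExpect_sum_pinGain_le (hμ : ∀ σ, 0 ≤ μ σ) (hμ1 : ∑ σ, μ σ = 1) {T : ℝ}
    (hT : 0 ≤ T) (hTn : T < n) :
    ∫ θ in (0 : ℝ)..T, pinExpect μ (θ / n) (fun σ U => ∑ x, ∑ y, pinGain μ U σ x y) ≤
      (n : ℝ) ^ 2 := by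
  have hn : (0 : ℝ) < n := hT.trans_lt hTn
  set G := fun θ : ℝ => n * ∑ U, bernoulliWeight (θ / n) U * expectedMargSqSum μ U
  have hG : ∀ θ ∈ Set.Icc 0 T, HasDerivAt G
      ((1 - θ / n)⁻¹ * pinExpect μ (θ / n) fun σ U => ∑ x, ∑ y, pinGain μ U σ x y) θ :=
    fun θ hθ => hasDerivAt_expectedMargSqSum hμ hn.ne' (hθ.2.trans_lt hTn).ne
  have hG_le : ∀ θ ∈ Set.Icc 0 T, G θ ≤ n * n := fun θ hθ => by
    have hp₀ : 0 ≤ θ / n := div_nonneg hθ.1 hn.le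
    have hp₁ : θ / n ≤ 1 := (div_le_one hn).mpr (hθ.2.trans hTn.le)
    refine mul_le_mul_of_nonneg_left ?_ hn.le
    calc ∑ U, bernoulliWeight (θ / n) U * expectedMargSqSum μ U
        ≤ ∑ U, bernoulliWeight (θ / n) U * n := Finset.sum_le_sum fun U _ =>
          mul_le_mul_of_nonneg_left (expectedMargSqSum_le hμ hμ1 U)
            (bernoulliWeight_nonneg hp₀ hp₁ U)
      _ = n := by rw [← Finset.sum_mul, sum_bernoulliWeight, one_mul]
  have hG_nonneg : 0 ≤ G 0 :=
    mul_nonneg hn.le (Finset.sum_nonneg fun U _ => mul_nonneg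
      (bernoulliWeight_nonneg (by simp) (by simp) U) (expectedMargSqSum_nonneg hμ U))
  calc ∫ θ in (0 : ℝ)..T, pinExpect μ (θ / n) (fun σ U => ∑ x, ∑ y, pinGain μ U σ x y)
      ≤ G T - G 0 := by
        refine intervalIntegral.integral_le_sub_of_hasDeriv_right_of_le hT
          (fun θ hθ => (hG θ hθ).continuousAt.continuousWithinAt)
          (fun θ hθ => (hG θ (Set.Ioo_subset_Icc_self hθ)).hasDerivWithinAt)
          ((continuous_pinExpect _).comp (continuous_id.div_const _)).integrableOn_Icc
          fun θ hθ => ?_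
        have h₁ : 0 < 1 - θ / n := by rw [sub_pos, div_lt_one hn]; exact hθ.2.trans hTn
        have h₂ : 1 - θ / n ≤ 1 := by linarith [div_nonneg hθ.1.le hn.le]
        have hp₁ : θ / n ≤ 1 := (div_le_one hn).mpr (hθ.2.trans hTn).le
        refine le_mul_of_one_le_left (pinExpect_nonneg hμ (div_nonneg hθ.1.le hn.le) hp₁
          fun σ U => Finset.sum_nonneg fun x _ => Finset.sum_nonneg fun y _ =>
            pinGain_nonneg hμ x y) ((one_le_inv₀ h₁).mpr h₂)
    _ ≤ (n : ℝ) ^ 2 := by nlinarith [hG_le T ⟨hT, le_rfl⟩]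

lemma le_pinExpect_epsSym (hμ : ∀ σ, 0 ≤ μ σ) (hμ1 : ∑ σ, μ σ = 1) {ε c p : ℝ} (hε : 0 < ε)
    (hc : 0 < c) (hp₀ : 0 ≤ p) (hp₁ : p ≤ 1) :
    (1 - Fintype.card Ω * c / (2 * ε)) - ((n : ℝ) ^ 2)⁻¹ / (2 * c * ε) *
        pinExpect μ p (fun σ U => ∑ x, ∑ y, pinGain μ U σ x y) ≤
      pinExpect μ p fun σ U => if epsSym n (condMass n μ U σ) ε then 1 else 0 := by
  rw [← pinExpect_const_sub_mul hμ1]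
  refine pinExpect_mono hμ hp₀ hp₁ fun σ U => ?_
  rw [epsSym_iff]
  refine le_trans ?_ (one_sub_div_le_ite_lt (mul_nonneg (by positivity) (Finset.sum_nonneg
    fun x₁ _ => Finset.sum_nonneg fun x₂ _ => pairTV_nonneg _ x₁ x₂)) hε)
  calc _ = 1 - (((n : ℝ) ^ 2)⁻¹ * (∑ x, ∑ y, pinGain μ U σ x y) / (2 * c) +
        Fintype.card Ω * c / 2) / ε := by ring
    _ ≤ _ := sub_le_sub_left
        (div_le_div_of_nonneg_right (sum_pairTV_condMass_le hμ hc) hε.le) 1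

lemma le_integral_pinExpect_epsSym (hμ : ∀ σ, 0 ≤ μ σ) (hμ1 : ∑ σ, μ σ = 1) {ε c T : ℝ}
    (hε : 0 < ε) (hc : 0 < c) (hT : 0 ≤ T) (hTn : T < n) :
    T * (1 - Fintype.card Ω * c / (2 * ε)) - 1 / (2 * c * ε) ≤
      ∫ θ in (0 : ℝ)..T,
        pinExpect μ (θ / n) fun σ U => if epsSym n (condMass n μ U σ) ε then 1 else 0 := by
  have hn : (0 : ℝ) < n := hT.trans_lt hTn
  set R := fun θ : ℝ => pinExpect μ (θ / n) fun σ U => ∑ x, ∑ y, pinGain μ U σ x y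
  have hRcont : Continuous R := (continuous_pinExpect _).comp (continuous_id.div_const _)
  have hR : ∫ θ in (0 : ℝ)..T, R θ ≤ (n : ℝ) ^ 2 :=
    integral_pinExpect_sum_pinGain_le hμ hμ1 hT hTn
  calc T * (1 - Fintype.card Ω * c / (2 * ε)) - 1 / (2 * c * ε)
      = T * (1 - Fintype.card Ω * c / (2 * ε)) -
          ((n : ℝ) ^ 2)⁻¹ / (2 * c * ε) * (n : ℝ) ^ 2 := by field_simp
    _ ≤ T * (1 - Fintype.card Ω * c / (2 * ε)) -
          ((n : ℝ) ^ 2)⁻¹ / (2 * c * ε) * ∫ θ in (0 : ℝ)..T, R θ := by gcongr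
    _ = ∫ θ in (0 : ℝ)..T,
          ((1 - Fintype.card Ω * c / (2 * ε)) - ((n : ℝ) ^ 2)⁻¹ / (2 * c * ε) * R θ) := by
        rw [intervalIntegral.integral_sub intervalIntegrable_const
          ((hRcont.intervalIntegrable _ _).const_mul _), intervalIntegral.integral_const,
          intervalIntegral.integral_const_mul, sub_zero, smul_eq_mul]
    _ ≤ _ := intervalIntegral.integral_mono_on hT
          ((continuous_const.sub (continuous_const.mul hRcont)).intervalIntegrable _ _)
          (((continuous_pinExpect _).comp (continuous_id.div_const _)).intervalIntegrable _ _)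
          fun θ hθ => le_pinExpect_epsSym hμ hμ1 hε hc (div_nonneg hθ.1 hn.le)
            ((div_le_one hn).mpr (hθ.2.trans hTn.le))

end Pinning

open Pinning in
theorem pinning_lemma_general (Ω : Type*) [Fintype Ω] (ε : ℝ) (hε : 0 < ε) :
    ∃ T : ℝ, 0 < T ∧ ∀ n : ℕ, T < n → ∀ μ : (Fin n → Ω) → ℝ,
      (∀ σ, 0 ≤ μ σ) → (∑ σ : Fin n → Ω, μ σ = 1) →
      1 - ε ≤ T⁻¹ * ∫ θ in (0 : ℝ)..T,
        ∑ σc : Fin n → Ω, μ σc *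
          ∑ U : Finset (Fin n),
            (∏ i ∈ U, θ / n) * (∏ i ∈ Uᶜ, (1 - θ / n)) *
              (if epsSym n (condMass n μ U σc) ε then 1 else 0) := by
  have hK : (0 : ℝ) < Fintype.card Ω + 1 := by positivity
  refine ⟨(Fintype.card Ω + 1) / ε ^ 4, by positivity, fun n hTn μ hμ hμ1 => ?_⟩
  rw [le_inv_mul_iff₀ (by positivity)]
  -- `c = ε² / (|Ω| + 1)` balances the AM-GM error `|Ω| c / 2` against the gain term `1 / (2 c)`.
  refine le_trans ?_ (le_integral_pinExpect_epsSym (c := ε ^ 2 / (Fintype.card Ω + 1)) hμ hμ1 hε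
    (by positivity) (by positivity) hTn)
  field_simp
  nlinarith

open Pinning in
/-- **The Pinning Lemma.** For every finite `Ω` and `ε>0` there is `T=T(ε,Ω)>0` such that
for all `n>T` and every probability mass function `μ` on `Ω^n`: drawing `σc ∼ μ`,
`θ` uniform on `(0,T)` and `U ⊆ [n]` by including each coordinate independently with
probability `θ/n`, the conditioned measure `μ̌` is `ε`-symmetric with probability
at least `1−ε`. -/
theorem pinning_lemma (Ω : Type*) [Fintype Ω] [Nonempty Ω] (ε : ℝ) (hε : 0 < ε) :
    ∃ T : ℝ, 0 < T ∧ ∀ n : ℕ, T < n → ∀ μ : (Fin n → Ω) → ℝ,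
      (∀ σ, 0 ≤ μ σ) → (∑ σ : Fin n → Ω, μ σ = 1) →
      1 - ε ≤ T⁻¹ * ∫ θ in (0 : ℝ)..T,
        ∑ σc : Fin n → Ω, μ σc *
          ∑ U : Finset (Fin n),
            (∏ i ∈ U, θ / n) * (∏ i ∈ Uᶜ, (1 - θ / n)) *
              (if epsSym n (condMass n μ U σc) ε then 1 else 0) :=
  pinning_lemma_general Ω ε hε
end
end
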